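/- arXiv:1706.02060 — 8 statements merged into one kernel-verified Lean document; each statement's English description precedes it below -/
import Mathlib

section
/- For a nonnegative integer N and an integer q with (N+1)/2 ≤ q ≤ N+1, the (N+1)×(N+1) pseudo-Vandermonde matrix whose first q columns are (1, u_j, u_j^2, ..., u_j^N) for j = 1,...,q and whose last N+1−q columns are the derivatives (0, 1, 2u_j, ..., N u_j^{N−1}) for j = 1,...,N+1−q is nonsingular, provided the real numbers u_1, ..., u_q are pairwise distinct. -/
/-!
A left null vector `v` of the matrix is the coefficient vector of a nonzero polynomial `p` of
degree at most `N`. The power columns say `p (u j) = 0` for `j < q` and the derivative columns say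
`p' (u j) = 0` for `j < N + 1 - q`, so `p` has at least `q + (N + 1 - q) = N + 1` roots counted
with multiplicity, which is impossible.
-/

open Polynomial Finset

namespace Polynomial

section ofFn

variable {R : Type*} [Semiring R] [DecidableEq R] {n : ℕ}

theorem eval_ofFn (v : Fin n → R) (x : R) :
    (ofFn n v).eval x = ∑ i, v i * x ^ (i : ℕ) := by
  simp [ofFn_eq_sum_monomial, eval_finsetSum]

theorem eval_derivative_ofFn (v : Fin n → R) (x : R) :
    (derivative (ofFn n v)).eval x = ∑ i, v i * ((i : ℕ) * x ^ ((i : ℕ) - 1)) := by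
  simp [ofFn_eq_sum_monomial, eval_finsetSum, derivative_monomial, mul_assoc]

end ofFn

theorem sum_rootMultiplicity_le_natDegree {R ι : Type*} [CommRing R] [IsDomain R] {s : Finset ι}
    {u : ι → R} (hu : Set.InjOn u s) (p : R[X]) :
    ∑ j ∈ s, p.rootMultiplicity (u j) ≤ p.natDegree := by
  classical
  calc ∑ j ∈ s, p.rootMultiplicity (u j)
      = ∑ a ∈ s.image u, p.roots.count a := by
        rw [sum_image hu]; simp only [count_roots]
    _ ≤ ∑ a ∈ s.image u ∪ p.roots.toFinset, p.roots.count a :=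
        sum_le_sum_of_subset subset_union_left
    _ = Multiset.card p.roots := Multiset.sum_count_eq_card fun a ha => by simp [ha]
    _ ≤ p.natDegree := card_roots' p

end Polynomial

theorem sum_range_ite_lt {M : Type*} [AddCommMonoid M] {r q : ℕ} (h : r ≤ q) (a b : M) :
    ∑ j ∈ range q, (if j < r then a else b) = r • a + (q - r) • b := by
  rw [← sum_range_add_sum_Ico _ h]
  simp (config := { contextual := true }) only [mem_range, mem_Ico, not_lt, sum_ite_of_true,
    sum_ite_of_false, sum_const, card_range, Nat.card_Ico, implies_true]

/-- The pseudo-Vandermonde matrix whose first `q` columns are `(1, u_j, …, u_j^N)`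
and whose last `N+1-q` columns are the derivative columns `(0, 1, 2u_j, …, N u_j^{N-1})`
is nonsingular when the `u_j` (for `j < q`) are pairwise distinct. -/
theorem pseudo_vandermonde_nonsingular (N q : ℕ) (hq1 : N + 1 ≤ 2 * q) (hq2 : q ≤ N + 1)
    (u : ℕ → ℝ) (hu : ∀ a < q, ∀ b < q, u a = u b → a = b) :
    (Matrix.of fun i j : Fin (N + 1) =>
      if (j : ℕ) < q then u (j : ℕ) ^ (i : ℕ)
      else ((i : ℕ) : ℝ) * u ((j : ℕ) - q) ^ ((i : ℕ) - 1)).det ≠ 0 := by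
  intro hdet
  obtain ⟨v, hv0, hv⟩ := Matrix.exists_vecMul_eq_zero_iff.mpr hdet
  set p := ofFn (N + 1) v
  have hp0 : p ≠ 0 := (map_ne_zero_iff _ (injective_ofFn _)).mpr hv0
  have hroot : ∀ j < q, p.IsRoot (u j) := fun j hj => by
    simpa [Matrix.vecMul, dotProduct, hj, IsRoot, p, eval_ofFn] using
      congrFun hv ⟨j, by omega⟩
  have hderiv : ∀ j < N + 1 - q, p.derivative.IsRoot (u j) := fun j hj => by
    simpa [Matrix.vecMul, dotProduct, IsRoot, p, eval_derivative_ofFn, mul_comm] using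
      congrFun hv ⟨q + j, by omega⟩
  have hmult : ∀ j ∈ range q, (if j < N + 1 - q then 2 else 1) ≤ p.rootMultiplicity (u j) := by
    intro j hj
    rw [mem_range] at hj
    split_ifs with hjr
    · exact (one_lt_rootMultiplicity_iff_isRoot hp0).mpr ⟨hroot j hj, hderiv j hjr⟩
    · exact (rootMultiplicity_pos hp0).mpr (hroot j hj)
  have hinj : Set.InjOn u (range q) := fun a ha b hb =>
    hu a (mem_range.mp ha) b (mem_range.mp hb)
  have key : N + 1 < N + 1 := calc
    N + 1 = ∑ j ∈ range q, (if j < N + 1 - q then 2 else 1) := by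
      rw [sum_range_ite_lt (by omega), smul_eq_mul, smul_eq_mul]; omega
    _ ≤ ∑ j ∈ range q, p.rootMultiplicity (u j) := sum_le_sum hmult
    _ ≤ p.natDegree := sum_rootMultiplicity_le_natDegree hinj p
    _ < N + 1 := ofFn_natDegree_lt (Nat.succ_pos N) v
  exact lt_irrefl _ key
end

section
/- Let N be odd, let t_min < t_max be reals, and let C_N(t) = (t, t^2, ..., t^N). Every point in the convex hull of the image of C_N over [t_min, t_max] can be written as a convex combination of at most (N+1)/2 points of the form C_N(t_j) with t_j ∈ [t_min, t_max]. -/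
/-!
Write `v` as the moment vector `∑ μ_s (s, …, s^N)` of finitely many positive masses `μ_s` at
points of `[tmin, tmax]`, and put `n = (N + 1) / 2`, so that `N = 2n - 1`. If there are more than
`n` points, Gauss quadrature replaces `μ` by `n` masses with the same moments up to degree
`2n - 1`. Its nodes are the roots of the monic degree-`n` polynomial `p` orthogonal to all lower
degree polynomials for `⟨f, g⟩ = ∑ μ_s f(s) g(s)`. They are real and simple: if `r₁, …, r_k` are
the roots of `p` of odd multiplicity, then `p · ∏ (X - rᵢ)` is nonnegative on `ℝ`, so for `k < n`
orthogonality would force it to vanish at all the (more than `n`) mass points. Applying the exact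
rule to `ℓ_x²`, `(X - tmin) ℓ_x²` and `(tmax - X) ℓ_x²`, for `ℓ_x` the Lagrange basis polynomial of
a node `x`, shows that the weights are positive and the nodes lie in `[tmin, tmax]`.
-/

open Polynomial Finset

theorem Finset.sum_image_smul_sum_fiber {ι α R M : Type*} [DecidableEq α] [Semiring R]
    [AddCommMonoid M] [Module R M] (s : Finset ι) (u : ι → α) (w : ι → R) (g : α → M) :
    ∑ t ∈ s.image u, (∑ i ∈ s with u i = t, w i) • g t = ∑ i ∈ s, w i • g (u i) :=
  sum_image' _ fun i _ => by
    rw [sum_smul]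
    exact sum_congr rfl fun j hj => by rw [(mem_filter.mp hj).2]

theorem exists_finset_pos_weights_of_mem_convexHull_image {𝕜 α E : Type*} [Field 𝕜]
    [LinearOrder 𝕜] [IsStrictOrderedRing 𝕜] [AddCommGroup E] [Module 𝕜 E] {φ : α → E} {A : Set α}
    {v : E} (hv : v ∈ convexHull 𝕜 (φ '' A)) :
    ∃ (S : Finset α) (c : α → 𝕜), ↑S ⊆ A ∧ (∀ t ∈ S, 0 < c t) ∧ ∑ t ∈ S, c t = 1 ∧
      ∑ t ∈ S, c t • φ t = v := by
  classical
  obtain ⟨ι, _, w, z, hw0, hw1, hz, rfl⟩ := mem_convexHull_iff_exists_fintype.mp hv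
  choose u huA hu using hz
  let c t := ∑ i with u i = t, w i
  have hc0 t : 0 ≤ c t := sum_nonneg fun i _ => hw0 i
  refine ⟨{t ∈ univ.image u | 0 < c t}, c, fun t ht => ?_, fun t ht => (mem_filter.mp ht).2,
    ?_, ?_⟩
  · obtain ⟨i, -, rfl⟩ := mem_image.mp (mem_filter.mp ht).1
    exact huA i
  · rw [sum_filter_of_ne fun t _ => (hc0 t).lt_of_ne']
    simpa [hw1] using sum_image_smul_sum_fiber univ u w fun _ => (1 : 𝕜)
  · rw [sum_filter_of_ne fun t _ h => (hc0 t).lt_of_ne' (left_ne_zero_of_smul h)]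
    simpa [hu] using sum_image_smul_sum_fiber univ u w φ

theorem exists_fin_weights_of_card_le {α R : Type*} [Semiring R] {O : Finset α} {n : ℕ}
    (hO : O.card ≤ n) (w : α → R) (d : α) :
    ∃ (c : Fin n → R) (t : Fin n → α), (∀ j, t j ∈ O ∧ c j = w (t j) ∨ t j = d ∧ c j = 0) ∧
      ∀ g : α → R, ∑ j, c j * g (t j) = ∑ x ∈ O, w x * g x := by
  obtain ⟨k, rfl⟩ := Nat.exists_eq_add_of_le hO
  let e := O.equivFin.symm
  refine ⟨Fin.append (fun i => w (e i)) 0, Fin.append (fun i => e i) fun _ => d,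
    fun j => ?_, fun g => ?_⟩
  · cases j using Fin.addCases <;> simp
  · rw [Fin.sum_univ_add]
    simp only [Fin.append_left, Fin.append_right, Pi.zero_apply, zero_mul, sum_const_zero,
      add_zero]
    rw [e.sum_comp (fun x : O => w x * g x), sum_coe_sort O fun x => w x * g x]

theorem Polynomial.Monic.exists_subset_roots_nonneg_eval_mul_prod {p : ℝ[X]} (hp : p.Monic) :
    ∃ O ⊆ p.roots.toFinset, ∀ x, 0 ≤ p.eval x * ∏ r ∈ O, (x - r) := by
  classical
  obtain ⟨q, hpq, -, hq0⟩ := exists_prod_multiset_X_sub_C_mul p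
  have hq : q.Monic := (monic_multisetProd_X_sub_C _).of_mul_monic_left (hpq ▸ hp)
  have hq_pos (x : ℝ) : 0 < q.eval x :=
    zero_lt_eval_of_roots_lt_of_leadingCoeff_nonneg
      (fun y hy => by simpa [hq0] using (mem_roots hq.ne_zero).2 hy) (by simp [hq.leadingCoeff])
  refine ⟨p.roots.toFinset.filter fun r => Odd (p.roots.count r), filter_subset _ _, fun x => ?_⟩
  have hp_eval : p.eval x = (∏ r ∈ p.roots.toFinset, (x - r) ^ p.roots.count r) * q.eval x := by
    conv_lhs => rw [← hpq]
    simp [prod_multiset_map_count, eval_prod]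
  rw [hp_eval, mul_right_comm, prod_filter, ← prod_mul_distrib]
  refine mul_nonneg (prod_nonneg fun r _ => ?_) (hq_pos x).le
  split_ifs with hodd
  · rw [← pow_succ]; exact hodd.add_one.pow_nonneg _
  · rw [mul_one]; exact (Nat.not_odd_iff_even.mp hodd).pow_nonneg _

noncomputable def discreteIntegral (S : Finset ℝ) (c : ℝ → ℝ) : ℝ[X] →ₗ[ℝ] ℝ :=
  ∑ t ∈ S, c t • leval t

section DiscreteIntegral

variable {S : Finset ℝ} {c : ℝ → ℝ} {f : ℝ[X]}

@[simp]
theorem discreteIntegral_apply (S : Finset ℝ) (c : ℝ → ℝ) (f : ℝ[X]) :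
    discreteIntegral S c f = ∑ t ∈ S, c t * f.eval t := by
  simp [discreteIntegral]

theorem discreteIntegral_nonneg (hc : ∀ t ∈ S, 0 ≤ c t) (hf : ∀ t ∈ S, 0 ≤ f.eval t) :
    0 ≤ discreteIntegral S c f := by
  rw [discreteIntegral_apply]
  exact sum_nonneg fun t ht => mul_nonneg (hc t ht) (hf t ht)

theorem eval_eq_zero_of_discreteIntegral_eq_zero (hc : ∀ t ∈ S, 0 < c t)
    (hf : ∀ t ∈ S, 0 ≤ f.eval t) (h : discreteIntegral S c f = 0) : ∀ t ∈ S, f.eval t = 0 := by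
  rw [discreteIntegral_apply,
    sum_eq_zero_iff_of_nonneg fun t ht => mul_nonneg (hc t ht).le (hf t ht)] at h
  exact fun t ht => (mul_eq_zero.mp (h t ht)).resolve_left (hc t ht).ne'

theorem discreteIntegral_mul_self_pos (hc : ∀ t ∈ S, 0 < c t) (hf : f ≠ 0)
    (hdeg : f.degree < S.card) : 0 < discreteIntegral S c (f * f) := by
  refine (discreteIntegral_nonneg (fun t ht => (hc t ht).le) fun t _ => ?_).lt_of_ne' fun h => ?_
  · rw [eval_mul]; exact mul_self_nonneg _
  · refine hf (eq_zero_of_degree_lt_of_eval_finset_eq_zero S hdeg fun t ht => ?_)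
    simpa using eval_eq_zero_of_discreteIntegral_eq_zero hc
      (fun t _ => by rw [eval_mul]; exact mul_self_nonneg _) h t ht

/-- `p = X ^ n + a`, where `a ∈ degreeLT ℝ n` represents `q ↦ -L (X ^ n * q)` for the form
`(f, g) ↦ L (f * g)`, `L = discreteIntegral S c`, which is positive definite on `degreeLT ℝ n`
because `n ≤ #S`. -/
theorem exists_monic_orthogonal (hc : ∀ t ∈ S, 0 < c t) {n : ℕ} (hn : n ≤ S.card) :
    ∃ p : ℝ[X], p.Monic ∧ p.natDegree = n ∧
      ∀ q : ℝ[X], q.natDegree < n → discreteIntegral S c (p * q) = 0 := by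
  let B : LinearMap.BilinForm ℝ ℝ[X] := (LinearMap.mul ℝ ℝ[X]).compr₂ (discreteIntegral S c)
  let W := degreeLT ℝ n
  have : FiniteDimensional ℝ W := (degreeLTEquiv ℝ n).symm.finiteDimensional
  have hsep : ∀ a : W, (∀ b : W, B.restrict W a b = 0) → a = 0 := by
    intro a ha
    by_contra h0
    have hdeg : (a : ℝ[X]).degree < S.card :=
      (mem_degreeLT.mp a.2).trans_le (by exact_mod_cast hn)
    exact (discreteIntegral_mul_self_pos hc (by simpa using h0) hdeg).ne' (ha a)
  have hB : (B.restrict W).Nondegenerate := ⟨hsep, fun b hb => hsep b fun a => by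
    simpa [B, mul_comm] using hb a⟩
  let φ : Module.Dual ℝ W := -((B (X ^ n)).domRestrict W)
  obtain ⟨a, ha⟩ : ∃ a : W, ∀ q : W,
      discreteIntegral S c (a * q) = -discreteIntegral S c (X ^ n * (q : ℝ[X])) :=
    ⟨((B.restrict W).toDual hB).symm φ, fun q => by
      simpa [φ, B] using LinearMap.BilinForm.apply_toDual_symm_apply (hB := hB) φ q⟩
  have hadeg : (a : ℝ[X]).degree < n := mem_degreeLT.mp a.2
  refine ⟨X ^ n + (a : ℝ[X]), monic_X_pow_add hadeg, ?_, fun q hq => ?_⟩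
  · rw [natDegree_add_eq_left_of_degree_lt (by rwa [degree_X_pow]), natDegree_X_pow]
  · have hq' : q ∈ degreeLT ℝ n :=
      mem_degreeLT.mpr (degree_le_natDegree.trans_lt (by exact_mod_cast hq))
    rw [add_mul, map_add, ha ⟨q, hq'⟩, add_neg_cancel]

theorem card_roots_toFinset_eq_of_orthogonal (hc : ∀ t ∈ S, 0 < c t) {n : ℕ} (hn : n ≤ S.card)
    {p : ℝ[X]} (hp : p.Monic) (hpn : p.natDegree = n)
    (horth : ∀ q : ℝ[X], q.natDegree < n → discreteIntegral S c (p * q) = 0) :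
    p.roots.toFinset.card = n := by
  classical
  refine le_antisymm ((Multiset.toFinset_card_le _).trans (hpn ▸ p.card_roots')) ?_
  by_contra! hlt
  obtain ⟨O, hO, hsign⟩ := hp.exists_subset_roots_nonneg_eval_mul_prod
  have hg : (∏ r ∈ O, (X - C r)).natDegree < n := by
    rw [natDegree_finsetProd_X_sub_C_eq_card]
    exact (card_le_card hO).trans_lt hlt
  have hzero := eval_eq_zero_of_discreteIntegral_eq_zero hc
    (fun t _ => by simpa [eval_prod] using hsign t) (horth _ hg)
  have hS : S ⊆ p.roots.toFinset := fun t ht => by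
    have := hzero t ht
    simp only [eval_mul, eval_prod, eval_sub, eval_X, eval_C, mul_eq_zero,
      prod_eq_zero_iff, sub_eq_zero] at this
    rcases this with h | ⟨r, hr, rfl⟩
    · simpa [hp.ne_zero] using h
    · exact hO hr
  exact (hn.trans (card_le_card hS)).not_gt hlt

/-- Gauss quadrature: the nodes are the roots of the orthogonal polynomial `p`, and exactness
follows by dividing `f` by `p` and interpolating the remainder at the nodes. -/
theorem exists_quadrature_card_eq (hc : ∀ t ∈ S, 0 < c t) {n : ℕ} (hn : n ≤ S.card) :
    ∃ (O : Finset ℝ) (w : ℝ → ℝ), O.card = n ∧ ∀ f : ℝ[X], f.natDegree < 2 * n →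
      discreteIntegral O w f = discreteIntegral S c f := by
  obtain ⟨p, hp, hpn, horth⟩ := exists_monic_orthogonal hc hn
  set O := p.roots.toFinset
  have hO : O.card = n := card_roots_toFinset_eq_of_orthogonal hc hn hp hpn horth
  refine ⟨O, fun x => discreteIntegral S c (Lagrange.basis O id x), hO, fun f hf => ?_⟩
  set r := f %ₘ p
  have hfr : r + p * (f /ₘ p) = f := modByMonic_add_div f p
  have hrO : ∀ x ∈ O, r.eval x = f.eval x := fun x hx => by
    rw [← hfr, eval_add, eval_mul, (mem_roots hp.ne_zero).mp (Multiset.mem_toFinset.mp hx),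
      zero_mul, add_zero]
  have hr : r.degree < O.card := by
    rw [hO, ← hpn, ← degree_eq_natDegree hp.ne_zero]
    exact degree_modByMonic_lt f hp
  have hquot : (f /ₘ p).natDegree < n := by
    rw [natDegree_divByMonic f hp, hpn]
    omega
  calc discreteIntegral O _ f
      = ∑ x ∈ O, r.eval x * discreteIntegral S c (Lagrange.basis O id x) := by
        rw [discreteIntegral_apply]
        exact sum_congr rfl fun x hx => by rw [hrO x hx, mul_comm]
    _ = discreteIntegral S c r := by
        conv_rhs => rw [Lagrange.eq_interpolate (Set.injOn_id _) hr, Lagrange.interpolate_apply]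
        simp only [map_sum, C_mul', map_smul, smul_eq_mul, id]
    _ = discreteIntegral S c f := by rw [← hfr, map_add, horth _ hquot, add_zero]

theorem discreteIntegral_mul_basis_sq {O : Finset ℝ} (w : ℝ → ℝ) {x : ℝ} (hx : x ∈ O)
    (g : ℝ[X]) :
    discreteIntegral O w (g * Lagrange.basis O id x ^ 2) = w x * g.eval x := by
  rw [discreteIntegral_apply, sum_eq_single_of_mem x hx fun y hy hyx => ?_]
  · have hself : (Lagrange.basis O id x).eval x = 1 :=
      Lagrange.eval_basis_self (Set.injOn_id _) hx
    simp [hself]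
  · have hne : (Lagrange.basis O id x).eval y = 0 :=
      Lagrange.eval_basis_of_ne (v := id) hyx.symm hy
    simp [hne]

section Quadrature

variable {O : Finset ℝ} {w : ℝ → ℝ}
  (hexact : ∀ f : ℝ[X], f.natDegree < 2 * O.card →
    discreteIntegral O w f = discreteIntegral S c f)
include hexact

theorem quadrature_weight_pos (hc : ∀ t ∈ S, 0 < c t) (hOS : O.card ≤ S.card) :
    ∀ x ∈ O, 0 < w x := by
  intro x hx
  have hO := card_pos.mpr ⟨x, hx⟩
  set l := Lagrange.basis O id x
  have hl : l.natDegree = O.card - 1 := Lagrange.natDegree_basis (Set.injOn_id _) hx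
  have hdeg : (1 * l ^ 2).natDegree < 2 * O.card := by
    rw [one_mul, natDegree_pow, hl]; omega
  have := hexact _ hdeg
  rw [discreteIntegral_mul_basis_sq w hx, eval_one, mul_one, one_mul, sq] at this
  rw [this]
  refine discreteIntegral_mul_self_pos hc (Lagrange.basis_ne_zero (Set.injOn_id _) hx) ?_
  rw [Lagrange.degree_basis (Set.injOn_id _) hx]
  exact_mod_cast (by omega : O.card - 1 < S.card)

theorem quadrature_subset_Icc (hc : ∀ t ∈ S, 0 ≤ c t) (hw : ∀ x ∈ O, 0 < w x) {a b : ℝ}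
    (hS : ↑S ⊆ Set.Icc a b) : ↑O ⊆ Set.Icc a b := by
  have key (g : ℝ[X]) (hg : g.natDegree ≤ 1) (hgS : ∀ t ∈ S, 0 ≤ g.eval t) :
      ∀ x ∈ O, 0 ≤ g.eval x := by
    intro x hx
    have hO := card_pos.mpr ⟨x, hx⟩
    have hdeg : (g * Lagrange.basis O id x ^ 2).natDegree < 2 * O.card := by
      refine natDegree_mul_le.trans_lt ?_
      rw [natDegree_pow, Lagrange.natDegree_basis (Set.injOn_id _) hx]
      omega
    have := hexact _ hdeg
    rw [discreteIntegral_mul_basis_sq w hx] at this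
    refine (mul_nonneg_iff_of_pos_left (hw x hx)).mp (this ▸ discreteIntegral_nonneg hc ?_)
    intro t ht
    rw [eval_mul, eval_pow]
    exact mul_nonneg (hgS t ht) (sq_nonneg _)
  intro x hx
  constructor
  · have := key (X - C a) (natDegree_X_sub_C_le a) (fun t ht => by simpa using (hS ht).1) x hx
    simpa using this
  · have := key (C b - X) (by compute_degree!) (fun t ht => by simpa using (hS ht).2) x hx
    simpa using this

end Quadrature

theorem exists_quadrature_card_le (hc : ∀ t ∈ S, 0 < c t) (n : ℕ) {a b : ℝ}
    (hS : ↑S ⊆ Set.Icc a b) :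
    ∃ (O : Finset ℝ) (w : ℝ → ℝ), O.card ≤ n ∧ (∀ x ∈ O, 0 < w x) ∧ ↑O ⊆ Set.Icc a b ∧
      ∀ f : ℝ[X], f.natDegree < 2 * n → discreteIntegral O w f = discreteIntegral S c f := by
  rcases le_or_gt S.card n with hSn | hnS
  · exact ⟨S, c, hSn, hc, hS, fun _ _ => rfl⟩
  obtain ⟨O, w, hO, hexact⟩ := exists_quadrature_card_eq hc hnS.le
  have hexact' : ∀ f : ℝ[X], f.natDegree < 2 * O.card →
      discreteIntegral O w f = discreteIntegral S c f := hO ▸ hexact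
  have hw := quadrature_weight_pos hexact' hc (hO ▸ hnS.le)
  exact ⟨O, w, hO.le, hw, quadrature_subset_Icc hexact' (fun t ht => (hc t ht).le) hw hS, hexact⟩

end DiscreteIntegral

/-- For odd `N`, every point of the convex hull of the moment curve
`t ↦ (t, t², …, t^N)` over `[t_min, t_max]` is a convex combination of at most
`(N+1)/2` points of the curve. -/
theorem convexHull_momentCurve_odd (N : ℕ) (hN : Odd N) (tmin tmax : ℝ) (h : tmin < tmax)
    (v : Fin N → ℝ)
    (hv : v ∈ convexHull ℝ ((fun t : ℝ => fun i : Fin N => t ^ ((i : ℕ) + 1)) ''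
      Set.Icc tmin tmax)) :
    ∃ c t : Fin ((N + 1) / 2) → ℝ,
      (∀ j, 0 ≤ c j) ∧ (∑ j, c j = 1) ∧ (∀ j, t j ∈ Set.Icc tmin tmax) ∧
      (∀ i : Fin N, ∑ j, c j * t j ^ ((i : ℕ) + 1) = v i) := by
  have hN' : N < 2 * ((N + 1) / 2) := by obtain ⟨k, rfl⟩ := hN; omega
  obtain ⟨S, μ, hSI, hμ, hμ1, hμv⟩ := exists_finset_pos_weights_of_mem_convexHull_image hv
  obtain ⟨O, w, hOn, hw, hOI, hexact⟩ := exists_quadrature_card_le hμ ((N + 1) / 2) hSI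
  obtain ⟨c, t, hct, hsum⟩ := exists_fin_weights_of_card_le hOn w tmin
  have hmoment (f : ℝ[X]) (hf : f.natDegree ≤ N) :
      ∑ j, c j * f.eval (t j) = ∑ s ∈ S, μ s * f.eval s := by
    rw [hsum (f.eval ·), ← discreteIntegral_apply, hexact f (by omega), discreteIntegral_apply]
  refine ⟨c, t, fun j => ?_, ?_, fun j => ?_, fun i => ?_⟩
  · rcases hct j with ⟨hj, hcj⟩ | ⟨-, hcj⟩
    · exact hcj ▸ (hw _ hj).le
    · exact hcj.ge
  · simpa [hμ1] using hmoment 1 (by simp)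
  · rcases hct j with ⟨hj, -⟩ | ⟨htj, -⟩
    · exact hOI hj
    · rw [htj]; exact Set.left_mem_Icc.mpr h.le
  · have := hmoment (X ^ ((i : ℕ) + 1)) (by rw [natDegree_X_pow]; omega)
    simp only [eval_pow, eval_X] at this
    simpa [this, Finset.sum_apply] using congrFun hμv i
end

section
/- Let N be odd and let P : ℝ → ℝ^N be a curve each of whose N components is a polynomial of degree at most N, and restrict P to [t_min, t_max]. Then every point in the convex hull of the image of P can be written as a convex combination of at most (N+1)/2 points of the image of P. -/
/-!
By Carathéodory, `v = ∫ P dμ` for a measure `μ` with finitely many positive atoms in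
`[tmin, tmax]`, and `N < 2k` for `k = (N + 1) / 2`, so it suffices to find a Gauss quadrature
rule for `μ`: at most `k` nodes in `[tmin, tmax]` with nonnegative weights, exact on polynomials
of degree `< 2k`.

If `μ` has more than `k` atoms, let `π` be the monic polynomial of degree `k` orthogonal to all
polynomials of lower degree. It has `k` simple roots in `(tmin, tmax)`: otherwise the product
`g` of `X - r` over its roots `r ∈ (tmin, tmax)` of odd multiplicity has degree `< k`, so
`∫ π g dμ = 0`, although `π g` has constant sign on `[tmin, tmax]` (all its roots there have
even multiplicity) and does not vanish at every atom. Dividing by `π` shows that the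
interpolatory rule at these roots, with weights `∫ ℓ_r dμ` for the Lagrange basis `ℓ_r`, is
exact up to degree `2k - 1`; applied to `ℓ_r²` it gives `∫ ℓ_r dμ = ∫ ℓ_r² dμ ≥ 0`.
-/

open Polynomial

theorem Polynomial.nonneg_or_nonpos_on_Icc_of_even_rootMultiplicity {a b : ℝ} (q : ℝ[X])
    (hq : ∀ r ∈ Set.Ioo a b, Even (q.rootMultiplicity r)) :
    (∀ t ∈ Set.Icc a b, 0 ≤ q.eval t) ∨ (∀ t ∈ Set.Icc a b, q.eval t ≤ 0) := by
  induction hn : q.natDegree using Nat.strong_induction_on generalizing q with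
  | _ n ih =>
  by_contra! hsign
  obtain ⟨⟨x, hx, hqx⟩, ⟨y, hy, hqy⟩⟩ := hsign
  obtain ⟨z, hz, hqz⟩ : ∃ z ∈ Set.Ioo a b, q.eval z = 0 := by
    rcases lt_or_gt_of_ne (show x ≠ y by rintro rfl; linarith) with hxy | hyx
    · obtain ⟨z, hz, hqz⟩ := intermediate_value_Ioo hxy.le q.continuous.continuousOn ⟨hqx, hqy⟩
      exact ⟨z, ⟨hx.1.trans_lt hz.1, hz.2.trans_le hy.2⟩, hqz⟩
    · obtain ⟨z, hz, hqz⟩ := intermediate_value_Ioo' hyx.le q.continuous.continuousOn ⟨hqx, hqy⟩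
      exact ⟨z, ⟨hy.1.trans_lt hz.1, hz.2.trans_le hx.2⟩, hqz⟩
  have hq0 : q ≠ 0 := by rintro rfl; simp at hqx
  set m := q.rootMultiplicity z
  set u := q /ₘ (X - C z) ^ m
  have hqu : (X - C z) ^ m * u = q := pow_mul_divByMonic_rootMultiplicity_eq q z
  have hu0 : u ≠ 0 := by rintro hu; simp [hu, eq_comm, hq0] at hqu
  have hdeg : u.natDegree < n := by
    have hm : 0 < m := (rootMultiplicity_pos hq0).mpr hqz
    have := natDegree_mul (pow_ne_zero m (X_sub_C_ne_zero z)) hu0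
    rw [hqu, hn, natDegree_pow, natDegree_X_sub_C] at this
    omega
  have hu : ∀ r ∈ Set.Ioo a b, Even (u.rootMultiplicity r) := by
    intro r hr
    have hzr : Even (((X - C z) ^ m).rootMultiplicity r) := by
      by_cases hrz : r = z
      · rw [hrz, rootMultiplicity_X_sub_C_pow]
        exact hq z hz
      · rw [rootMultiplicity_eq_zero (by simp [sub_eq_zero, hrz])]
        exact Even.zero
    have hqr := hq r hr
    rw [← hqu, rootMultiplicity_mul (hqu ▸ hq0)] at hqr
    exact (Nat.even_add.mp hqr).mp hzr
  have hqeval (t : ℝ) : q.eval t = (t - z) ^ m * u.eval t := by simp [← hqu]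
  rcases ih _ hdeg u hu rfl with hnonneg | hnonpos
  · have := mul_nonneg ((hq z hz).pow_nonneg (x - z)) (hnonneg x hx)
    linarith [hqeval x]
  · have := mul_nonpos_of_nonneg_of_nonpos ((hq z hz).pow_nonneg (y - z)) (hnonpos y hy)
    linarith [hqeval y]

/-- `q ↦ ∫ q dμ` for the discrete measure `μ = ∑ x ∈ S, W x • δ x`. -/
noncomputable def weightedEval (S : Finset ℝ) (W : ℝ → ℝ) : ℝ[X] →ₗ[ℝ] ℝ :=
  ∑ x ∈ S, W x • leval x

section weightedEval

variable {S : Finset ℝ} {W : ℝ → ℝ}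

@[simp]
theorem weightedEval_apply (q : ℝ[X]) : weightedEval S W q = ∑ x ∈ S, W x * q.eval x := by
  simp [weightedEval]

theorem weightedEval_nonneg (hW : ∀ x ∈ S, 0 ≤ W x) {q : ℝ[X]} (hq : ∀ x ∈ S, 0 ≤ q.eval x) :
    0 ≤ weightedEval S W q := by
  rw [weightedEval_apply]
  exact Finset.sum_nonneg fun x hx => mul_nonneg (hW x hx) (hq x hx)

theorem weightedEval_pos (hW : ∀ x ∈ S, 0 < W x) {q : ℝ[X]} (hq : ∀ x ∈ S, 0 ≤ q.eval x)
    {x₀ : ℝ} (hx₀ : x₀ ∈ S) (hqx₀ : q.eval x₀ ≠ 0) : 0 < weightedEval S W q := by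
  rw [weightedEval_apply]
  exact Finset.sum_pos' (fun x hx => mul_nonneg (hW x hx).le (hq x hx))
    ⟨x₀, hx₀, mul_pos (hW x₀ hx₀) ((hq x₀ hx₀).lt_of_ne' hqx₀)⟩

theorem eq_zero_of_weightedEval_mul_self_eq_zero (hW : ∀ x ∈ S, 0 < W x) {g : ℝ[X]}
    (hg : g.natDegree < S.card) (h : weightedEval S W (g * g) = 0) : g = 0 := by
  refine eq_zero_of_natDegree_lt_card_of_eval_eq_zero' g S (fun x hx => ?_) hg
  by_contra hgx
  exact (weightedEval_pos hW (fun y _ => by simp [mul_self_nonneg]) hx (by simpa using hgx)).ne' h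

theorem weightedEval_mul_eq_zero_of_forall_X_pow {f g : ℝ[X]} {k : ℕ}
    (hf : ∀ i < k, weightedEval S W (f * X ^ i) = 0) (hg : g.natDegree < k) :
    weightedEval S W (f * g) = 0 := by
  rw [g.as_sum_range' k hg, Finset.mul_sum, map_sum]
  refine Finset.sum_eq_zero fun i hi => ?_
  rw [← C_mul_X_pow_eq_monomial, mul_left_comm, C_mul', map_smul,
    hf i (Finset.mem_range.mp hi), smul_zero]

theorem exists_monic_orthogonal_s4 (hW : ∀ x ∈ S, 0 < W x) {k : ℕ} (hk : k ≤ S.card) :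
    ∃ π : ℝ[X], π.Monic ∧ π.natDegree = k ∧
      ∀ g : ℝ[X], g.natDegree < k → weightedEval S W (π * g) = 0 := by
  -- `Φ c = (∫ g X^i dμ)_{i < k}` for the polynomial `g` of degree `< k` with coefficients `c`.
  let Φ : (Fin k → ℝ) →ₗ[ℝ] Fin k → ℝ := LinearMap.pi fun i =>
    (weightedEval S W).comp <| (LinearMap.mulRight ℝ (X ^ (i : ℕ))).comp <|
      (degreeLT ℝ k).subtype.comp (degreeLTEquiv ℝ k).symm.toLinearMap
  have hΦ : Function.Injective Φ := by
    rw [← LinearMap.ker_eq_bot, LinearMap.ker_eq_bot']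
    intro c hc
    set g : ℝ[X] := ((degreeLTEquiv ℝ k).symm c : ℝ[X])
    suffices g = 0 by simpa [g] using this
    by_contra hg0
    have hgk : g.natDegree < k :=
      (natDegree_lt_iff_degree_lt hg0).mpr (mem_degreeLT.mp ((degreeLTEquiv ℝ k).symm c).2)
    exact hg0 <| eq_zero_of_weightedEval_mul_self_eq_zero hW (hgk.trans_le hk) <|
      weightedEval_mul_eq_zero_of_forall_X_pow (fun i hi => congrFun hc ⟨i, hi⟩) hgk
  obtain ⟨c, hc⟩ := LinearMap.injective_iff_surjective.mp hΦ
    fun i => -weightedEval S W (X ^ k * X ^ (i : ℕ))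
  set g : ℝ[X] := ((degreeLTEquiv ℝ k).symm c : ℝ[X])
  have hgk : g.degree < k := mem_degreeLT.mp ((degreeLTEquiv ℝ k).symm c).2
  refine ⟨X ^ k + g, monic_X_pow_add hgk, ?_, fun f hf => ?_⟩
  · rw [natDegree_add_eq_left_of_degree_lt (by simpa using hgk), natDegree_X_pow]
  refine weightedEval_mul_eq_zero_of_forall_X_pow (fun i hi => ?_) hf
  have hgi : weightedEval S W (g * X ^ i) = -weightedEval S W (X ^ k * X ^ i) := congrFun hc ⟨i, hi⟩
  rw [add_mul, map_add, hgi, add_neg_cancel]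

theorem exists_nodal_eq_of_orthogonal (hW : ∀ x ∈ S, 0 < W x) {a b : ℝ}
    (hS : ↑S ⊆ Set.Icc a b) {π : ℝ[X]} (hπ : π.Monic) (hπS : π.natDegree < S.card)
    (horth : ∀ g : ℝ[X], g.natDegree < π.natDegree → weightedEval S W (π * g) = 0) :
    ∃ R : Finset ℝ, ↑R ⊆ Set.Ioo a b ∧ π = Lagrange.nodal R id := by
  set R := π.roots.toFinset.filter fun r => r ∈ Set.Ioo a b ∧ Odd (π.rootMultiplicity r)
  have hRroots : R.val ≤ π.roots :=
    (Finset.val_le_iff.mpr (Finset.filter_subset _ _)).trans (Multiset.dedup_le _)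
  have hmem {r : ℝ} (hr : r ∈ Set.Ioo a b) (hodd : Odd (π.rootMultiplicity r)) : r ∈ R := by
    refine Finset.mem_filter.mpr ⟨Multiset.mem_toFinset.mpr ?_, hr, hodd⟩
    exact (mem_roots hπ.ne_zero).mpr ((rootMultiplicity_pos hπ.ne_zero).mp hodd.pos)
  suffices hRπ : π.natDegree ≤ R.card by
    refine ⟨R, fun r hr => (Finset.mem_filter.mp hr).2.1, ?_⟩
    refine eq_of_monic_of_dvd_of_natDegree_le Lagrange.nodal_monic hπ ?_ (by simpa using hRπ)
    exact (Multiset.prod_X_sub_C_dvd_iff_le_roots hπ.ne_zero R.val).mpr hRroots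
  by_contra! hRπ
  set g := Lagrange.nodal R id
  have hπg : π * g ≠ 0 := mul_ne_zero hπ.ne_zero Lagrange.nodal_ne_zero
  have heven : ∀ r ∈ Set.Ioo a b, Even ((π * g).rootMultiplicity r) := by
    intro r hr
    rw [rootMultiplicity_mul hπg, ← count_roots g]
    simp only [g, Lagrange.nodal_eq, id]
    rw [roots_prod_X_sub_C, Multiset.count_eq_of_nodup R.nodup]
    by_cases hrR : r ∈ R
    · simpa [hrR] using (Finset.mem_filter.mp hrR).2.2.add_one
    · simpa [hrR] using fun hodd => hrR (hmem hr hodd)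
  obtain ⟨x₀, hx₀, hπx₀⟩ : ∃ x₀ ∈ S, π.eval x₀ ≠ 0 := by
    by_contra! h
    exact hπ.ne_zero (eq_zero_of_natDegree_lt_card_of_eval_eq_zero' π S h hπS)
  have hgx₀ : g.eval x₀ ≠ 0 := Lagrange.eval_nodal_not_at_node fun r hr hx₀r =>
    hπx₀ ((mem_roots hπ.ne_zero).mp (Multiset.mem_of_le hRroots (hx₀r ▸ hr)))
  have hπgx₀ : (π * g).eval x₀ ≠ 0 := by simpa using mul_ne_zero hπx₀ hgx₀
  have hL : weightedEval S W (π * g) = 0 := horth g (by simpa [g] using hRπ)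
  rcases (π * g).nonneg_or_nonpos_on_Icc_of_even_rootMultiplicity heven with hpos | hneg
  · exact (weightedEval_pos hW (fun x hx => hpos x (hS hx)) hx₀ hπgx₀).ne' hL
  · have := weightedEval_pos hW (q := -(π * g)) (fun x hx => by simpa using hneg x (hS hx)) hx₀
      (by simpa using hπgx₀)
    linarith [map_neg (weightedEval S W) (π * g)]

theorem weightedEval_lagrangeBasis_eq_of_orthogonal_nodal {R : Finset ℝ}
    (horth : ∀ g : ℝ[X], g.natDegree < R.card → weightedEval S W (Lagrange.nodal R id * g) = 0)
    {q : ℝ[X]} (hq : q.natDegree < 2 * R.card) :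
    weightedEval R (fun r => weightedEval S W (Lagrange.basis R id r)) q = weightedEval S W q := by
  set π := Lagrange.nodal R id
  set q₀ := q %ₘ π
  have hqq₀ : q₀ + π * (q /ₘ π) = q := modByMonic_add_div q π
  have hdiv : (q /ₘ π).natDegree < R.card := by
    rw [natDegree_divByMonic q Lagrange.nodal_monic, Lagrange.natDegree_nodal]
    omega
  have hq₀ : q₀ = Lagrange.interpolate R id fun r => q₀.eval r := by
    refine Lagrange.eq_interpolate (Set.injOn_id _) ?_
    simpa [Lagrange.degree_nodal] using
      degree_modByMonic_lt q (Lagrange.nodal_monic (s := R) (v := id))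
  have hnode {r : ℝ} (hr : r ∈ R) : q.eval r = q₀.eval r := by
    have hπr : π.eval r = 0 := Lagrange.eval_nodal_at_node (v := id) hr
    rw [← hqq₀, eval_add, eval_mul, hπr, zero_mul, add_zero]
  calc weightedEval R (fun r => weightedEval S W (Lagrange.basis R id r)) q
      = weightedEval S W q₀ := by
        rw [hq₀, Lagrange.interpolate_apply, map_sum, weightedEval_apply]
        refine Finset.sum_congr rfl fun r hr => ?_
        rw [C_mul', map_smul, smul_eq_mul, mul_comm, hnode hr]
    _ = weightedEval S W q := by rw [← hqq₀, map_add, horth _ hdiv, add_zero]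

theorem exists_gaussQuadrature (hW : ∀ x ∈ S, 0 < W x) {a b : ℝ} (hS : ↑S ⊆ Set.Icc a b)
    (k : ℕ) :
    ∃ (R : Finset ℝ) (c : ℝ → ℝ), R.card ≤ k ∧ ↑R ⊆ Set.Icc a b ∧ (∀ r ∈ R, 0 ≤ c r) ∧
      ∀ q : ℝ[X], q.natDegree < 2 * k → weightedEval R c q = weightedEval S W q := by
  rcases le_or_gt S.card k with hSk | hkS
  · exact ⟨S, W, hSk, hS, fun x hx => (hW x hx).le, fun _ _ => rfl⟩
  obtain ⟨π, hπ, rfl, horth⟩ := exists_monic_orthogonal_s4 hW hkS.le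
  obtain ⟨R, hRab, rfl⟩ := exists_nodal_eq_of_orthogonal hW hS hπ hkS horth
  rw [Lagrange.natDegree_nodal] at horth ⊢
  set c := fun r => weightedEval S W (Lagrange.basis R id r)
  refine ⟨R, c, le_rfl, hRab.trans Set.Ioo_subset_Icc_self, fun r hr => ?_,
    fun q hq => weightedEval_lagrangeBasis_eq_of_orthogonal_nodal horth hq⟩
  have hexact := weightedEval_lagrangeBasis_eq_of_orthogonal_nodal horth
    (q := Lagrange.basis R id r ^ 2) (by
      rw [natDegree_pow, Lagrange.natDegree_basis (Set.injOn_id _) hr]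
      have := Finset.card_pos.mpr ⟨r, hr⟩
      omega)
  have hcr : weightedEval R c (Lagrange.basis R id r ^ 2) = c r := by
    rw [weightedEval_apply, Finset.sum_eq_single r]
    · have h1 : (Lagrange.basis R id r).eval r = 1 :=
        Lagrange.eval_basis_self (v := id) (Set.injOn_id _) hr
      simp [h1]
    · intro r' hr' hr'r
      have h0 : (Lagrange.basis R id r).eval r' = 0 :=
        Lagrange.eval_basis_of_ne (v := id) hr'r.symm hr'
      simp [h0]
    · exact absurd hr
  rw [← hcr, hexact]
  exact weightedEval_nonneg (fun x hx => (hW x hx).le) fun x _ => by simp [sq_nonneg]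

end weightedEval

theorem exists_weightedEval_eq_of_mem_convexHull {ι : Type*} {s : Set ℝ} {p : ι → ℝ[X]}
    {v : ι → ℝ} (hv : v ∈ convexHull ℝ ((fun t i => (p i).eval t) '' s)) :
    ∃ (S : Finset ℝ) (W : ℝ → ℝ), ↑S ⊆ s ∧ (∀ x ∈ S, 0 < W x) ∧ weightedEval S W 1 = 1 ∧
      ∀ i, weightedEval S W (p i) = v i := by
  obtain ⟨κ, _, z, w, hzs, hz, hw, hw1, hwz⟩ := eq_pos_convex_span_of_mem_convexHull hv
  choose t hts htz using fun j => hzs (Set.mem_range_self j)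
  have ht : Function.Injective t := fun j j' h => hz.injective (by rw [← htz j, ← htz j', h])
  have hsum (q : ℝ[X]) :
      weightedEval (Finset.univ.image t) (Function.extend t w 0) q = ∑ j, w j * q.eval (t j) := by
    rw [weightedEval_apply, Finset.sum_image ht.injOn]
    simp [ht.extend_apply]
  refine ⟨Finset.univ.image t, Function.extend t w 0, ?_, ?_, ?_, fun i => ?_⟩
  · simpa [Set.range_subset_iff] using hts
  · simpa [ht.extend_apply] using hw
  · simpa [hsum] using hw1
  · rw [hsum, ← hwz, Finset.sum_apply]
    simp [← htz]

theorem exists_fin_weights_of_card_le_s4 {α : Type*} {R : Finset α} {k : ℕ} (hR : R.card ≤ k)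
    {I : Set α} {t₀ : α} (ht₀ : t₀ ∈ I) (hRI : ↑R ⊆ I) {c : α → ℝ} (hc : ∀ r ∈ R, 0 ≤ c r) :
    ∃ (c' : Fin k → ℝ) (t : Fin k → α), (∀ j, 0 ≤ c' j) ∧ (∀ j, t j ∈ I) ∧
      ∀ f : α → ℝ, ∑ j, c' j * f (t j) = ∑ r ∈ R, c r * f r := by
  obtain ⟨e⟩ : Nonempty (R ↪ Fin k) := Function.Embedding.nonempty_of_card_le (by simpa using hR)
  refine ⟨Function.extend e (fun r => c r) 0, Function.extend e Subtype.val fun _ => t₀,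
    fun j => ?_, fun j => ?_, fun f => ?_⟩
  · by_cases hj : ∃ r, e r = j
    · obtain ⟨r, rfl⟩ := hj
      simpa [e.injective.extend_apply] using hc r r.2
    · simp [Function.extend_apply' _ _ _ hj]
  · by_cases hj : ∃ r, e r = j
    · obtain ⟨r, rfl⟩ := hj
      simpa [e.injective.extend_apply] using hRI r.2
    · simpa [Function.extend_apply' _ _ _ hj] using ht₀
  · rw [← Finset.sum_coe_sort R]
    refine (Fintype.sum_of_injective e e.injective _ _ (fun j hj => ?_) fun r => ?_).symm
    · simp [Function.extend_apply' _ _ _ hj]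
    · simp [e.injective.extend_apply]

theorem convexHull_polynomialCurve_odd_general (N : ℕ) (hN : Odd N) (tmin tmax : ℝ)
    (p : Fin N → Polynomial ℝ) (hdeg : ∀ i, (p i).natDegree ≤ N)
    (v : Fin N → ℝ)
    (hv : v ∈ convexHull ℝ ((fun t : ℝ => fun i : Fin N => (p i).eval t) ''
      Set.Icc tmin tmax)) :
    ∃ c t : Fin ((N + 1) / 2) → ℝ,
      (∀ j, 0 ≤ c j) ∧ (∑ j, c j = 1) ∧ (∀ j, t j ∈ Set.Icc tmin tmax) ∧
      (∀ i : Fin N, ∑ j, c j * (p i).eval (t j) = v i) := by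
  obtain ⟨t₀, ht₀⟩ := Set.image_nonempty.mp (convexHull_nonempty_iff.mp ⟨v, hv⟩)
  obtain ⟨S, W, hS, hW, hW1, hSv⟩ := exists_weightedEval_eq_of_mem_convexHull hv
  obtain ⟨R, c, hRk, hR, hc, hexact⟩ := exists_gaussQuadrature hW hS ((N + 1) / 2)
  obtain ⟨c', t, hc', ht, hsum⟩ := exists_fin_weights_of_card_le_s4 hRk ht₀ hR hc
  have hN2 : N < 2 * ((N + 1) / 2) := by
    obtain ⟨m, rfl⟩ := hN
    omega
  have hquad (q : ℝ[X]) (hq : q.natDegree ≤ N) :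
      ∑ j, c' j * q.eval (t j) = weightedEval S W q := by
    rw [hsum fun x => q.eval x, ← weightedEval_apply, hexact q (hq.trans_lt hN2)]
  refine ⟨c', t, hc', ?_, ht, fun i => (hquad (p i) (hdeg i)).trans (hSv i)⟩
  simpa using (hquad 1 (by simp)).trans hW1

/-- For odd `N` and a curve `P` whose `N` components are polynomials of degree at
most `N`, restricted to `[t_min, t_max]`, every point of the convex hull of the
image of `P` is a convex combination of at most `(N+1)/2` points of the image. -/
theorem convexHull_polynomialCurve_odd (N : ℕ) (hN : Odd N) (tmin tmax : ℝ)
    (h : tmin < tmax) (p : Fin N → Polynomial ℝ) (hdeg : ∀ i, (p i).natDegree ≤ N)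
    (v : Fin N → ℝ)
    (hv : v ∈ convexHull ℝ ((fun t : ℝ => fun i : Fin N => (p i).eval t) ''
      Set.Icc tmin tmax)) :
    ∃ c t : Fin ((N + 1) / 2) → ℝ,
      (∀ j, 0 ≤ c j) ∧ (∑ j, c j = 1) ∧ (∀ j, t j ∈ Set.Icc tmin tmax) ∧
      (∀ i : Fin N, ∑ j, c j * (p i).eval (t j) = v i) :=
  convexHull_polynomialCurve_odd_general N hN tmin tmax p hdeg v hv
end

section
/- Let N be odd, t_min < t_max, M₁, M₂ ≤ (N+1)/2 positive integers. Suppose Σ_{j=1}^{M₁} c_j · (1, t_j, ..., t_j^N) = Σ_{j=1}^{M₂} c'_j · (1, t'_j, ..., t'_j^N), where for each naming: all coefficients are strictly positive, the parameters lie in [t_min, t_max] and are strictly increasing. Then M₁ = M₂, and c_j = c'_j, t_j = t'_j for all j. -/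
/-!
Both namings define the same finitely supported measure `∑ⱼ cⱼ δ_{tⱼ}` on the line: the difference
of the two measures has at most `M₁ + M₂ ≤ N + 1` atoms and vanishing moments of orders `0, …, N`,
so it is zero because a Vandermonde matrix on distinct nodes is invertible. Equal measures with
nonzero weights have the same atoms with the same weights, and a finite set of reals has only one
strictly increasing enumeration.
-/

open Finset

section Moments

variable {R : Type*} [CommRing R]

def moment (μ : R →₀ R) (i : ℕ) : R :=
  μ.sum fun x a => a * x ^ i

lemma moment_sub (μ ν : R →₀ R) (i : ℕ) : moment (μ - ν) i = moment μ i - moment ν i :=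
  Finsupp.sum_sub_index fun _ _ _ => sub_mul _ _ _

lemma eq_zero_of_moment_eq_zero [IsDomain R] {μ : R →₀ R} {n : ℕ} (hcard : #μ.support ≤ n)
    (hmoment : ∀ i < n, moment μ i = 0) : μ = 0 := by
  let e := μ.support.equivFin
  have hatoms : (fun k => μ (e.symm k)) = 0 := by
    refine Matrix.eq_zero_of_forall_pow_sum_mul_pow_eq_zero
      (f := fun k => (e.symm k : R)) (Subtype.val_injective.comp e.symm.injective) fun i => ?_
    rw [e.symm.sum_comp (fun x : μ.support => μ x * (x : R) ^ (i : ℕ))]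
    exact (sum_coe_sort μ.support fun x => μ x * x ^ (i : ℕ)).trans
      (hmoment i (i.2.trans_le hcard))
  ext x
  by_contra hx
  exact hx (by simpa using congrFun hatoms (e ⟨x, Finsupp.mem_support_iff.2 hx⟩))

lemma eq_of_moment_eq [IsDomain R] [DecidableEq R] {μ ν : R →₀ R} {n : ℕ}
    (hcard : #(μ.support ∪ ν.support) ≤ n)
    (hmoment : ∀ i < n, moment μ i = moment ν i) : μ = ν := by
  refine sub_eq_zero.1 (eq_zero_of_moment_eq_zero ((card_le_card Finsupp.support_sub).trans hcard)
    fun i hi => ?_)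
  rw [moment_sub, hmoment i hi, sub_self]

end Moments

section DiscreteMeasure

variable {R : Type*} [CommRing R] {M : ℕ}

noncomputable def discreteMeasure (c t : Fin M → R) : R →₀ R :=
  ∑ j, Finsupp.single (t j) (c j)

lemma moment_discreteMeasure (c t : Fin M → R) (i : ℕ) :
    moment (discreteMeasure c t) i = ∑ j, c j * t j ^ i := by
  rw [moment, discreteMeasure, ← Finsupp.sum_finsetSum_index (fun _ => zero_mul _)
    (fun _ _ _ => add_mul _ _ _)]
  simp only [Finsupp.sum_single_index, zero_mul]

lemma support_discreteMeasure_subset [DecidableEq R] (c t : Fin M → R) :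
    (discreteMeasure c t).support ⊆ univ.image t := by
  refine Finsupp.support_finsetSum.trans fun x hx => ?_
  obtain ⟨j, -, hj⟩ := mem_biUnion.1 hx
  exact mem_image.2 ⟨j, mem_univ j, (mem_singleton.1 (Finsupp.support_single_subset hj)).symm⟩

lemma card_support_discreteMeasure_le (c t : Fin M → R) : #(discreteMeasure c t).support ≤ M := by
  classical
  exact (card_le_card (support_discreteMeasure_subset c t)).trans
    (card_image_le.trans_eq (card_fin M))

lemma discreteMeasure_apply_of_injective (c : Fin M → R) {t : Fin M → R}
    (ht : Function.Injective t) (j : Fin M) : discreteMeasure c t (t j) = c j := by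
  classical
  simp [discreteMeasure, Finsupp.finsetSum_apply, Finsupp.single_apply, ht.eq_iff]

lemma range_subset_of_discreteMeasure_eq {M' : ℕ} {c t : Fin M → R} {c' t' : Fin M' → R}
    (ht : Function.Injective t) (hc : ∀ j, c j ≠ 0)
    (h : discreteMeasure c t = discreteMeasure c' t') : Set.range t ⊆ Set.range t' := by
  classical
  rintro _ ⟨j, rfl⟩
  have hmem : t j ∈ (discreteMeasure c' t').support := by
    rw [Finsupp.mem_support_iff, ← h, discreteMeasure_apply_of_injective c ht]
    exact hc j
  simpa using support_discreteMeasure_subset c' t' hmem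

end DiscreteMeasure

lemma Fin.exists_cast_eq_of_range_eq {α : Type*} [Preorder α] {m n : ℕ} {f : Fin m → α}
    {g : Fin n → α} (hf : StrictMono f) (hg : StrictMono g) (h : Set.range f = Set.range g) :
    ∃ hmn : m = n, f = g ∘ Fin.cast hmn := by
  have hmn : m = n := by
    simpa [Nat.card_range_of_injective hf.injective, Nat.card_range_of_injective hg.injective]
      using congrArg (fun s : Set α => Nat.card s) h
  subst hmn
  exact ⟨rfl, (hf.range_inj hg).1 h⟩

theorem nonreducible_naming_unique_odd_general (N : ℕ) (M₁ M₂ : ℕ)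
    (hM1 : M₁ ≤ (N + 1) / 2) (hM2 : M₂ ≤ (N + 1) / 2)
    (c t : Fin M₁ → ℝ) (c' t' : Fin M₂ → ℝ)
    (hc : ∀ j, 0 < c j) (hc' : ∀ j, 0 < c' j)
    (hst : StrictMono t) (hst' : StrictMono t')
    (heq : ∀ i : Fin (N + 1), ∑ j, c j * t j ^ (i : ℕ) = ∑ j, c' j * t' j ^ (i : ℕ)) :
    ∃ hM : M₁ = M₂, ∀ j : Fin M₁, c j = c' (Fin.cast hM j) ∧ t j = t' (Fin.cast hM j) := by
  have hμ : discreteMeasure c t = discreteMeasure c' t' := by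
    refine eq_of_moment_eq (n := N + 1) ?_ fun i hi => ?_
    · have := card_support_discreteMeasure_le c t
      have := card_support_discreteMeasure_le c' t'
      exact (card_union_le _ _).trans (by omega)
    · simpa only [moment_discreteMeasure] using heq ⟨i, hi⟩
  have hrange : Set.range t = Set.range t' :=
    (range_subset_of_discreteMeasure_eq hst.injective (fun j => (hc j).ne') hμ).antisymm
      (range_subset_of_discreteMeasure_eq hst'.injective (fun j => (hc' j).ne') hμ.symm)
  obtain ⟨rfl, rfl⟩ := Fin.exists_cast_eq_of_range_eq hst hst' hrange
  refine ⟨rfl, fun j => ⟨?_, rfl⟩⟩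
  simpa [discreteMeasure_apply_of_injective _ hst.injective,
    discreteMeasure_apply_of_injective _ hst'.injective] using congr($hμ (t' j))

/-- Uniqueness of non-reducible namings for odd `N`: two convex combinations of
points on the moment curve with strictly positive coefficients and strictly
increasing parameters, each with at most `(N+1)/2` terms, that agree on all
moments `(1, t, …, t^N)`, coincide term by term. -/
theorem nonreducible_naming_unique_odd (N : ℕ) (hN : Odd N) (tmin tmax : ℝ)
    (h : tmin < tmax) (M₁ M₂ : ℕ) (h1 : 0 < M₁) (h2 : 0 < M₂)
    (hM1 : M₁ ≤ (N + 1) / 2) (hM2 : M₂ ≤ (N + 1) / 2)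
    (c t : Fin M₁ → ℝ) (c' t' : Fin M₂ → ℝ)
    (hc : ∀ j, 0 < c j) (hc' : ∀ j, 0 < c' j)
    (ht : ∀ j, t j ∈ Set.Icc tmin tmax) (ht' : ∀ j, t' j ∈ Set.Icc tmin tmax)
    (hst : StrictMono t) (hst' : StrictMono t')
    (heq : ∀ i : Fin (N + 1), ∑ j, c j * t j ^ (i : ℕ) = ∑ j, c' j * t' j ^ (i : ℕ)) :
    ∃ hM : M₁ = M₂, ∀ j : Fin M₁, c j = c' (Fin.cast hM j) ∧ t j = t' (Fin.cast hM j) :=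
  nonreducible_naming_unique_odd_general N M₁ M₂ hM1 hM2 c t c' t' hc hc' hst hst' heq
end

section
/- Let N be a positive integer, t_min < t_max, and suppose Σ_{j=1}^{M₁} c_j · (1, t_j, ..., t_j^N) = Σ_{j=1}^{M₂} c'_j · (1, t'_j, ..., t'_j^N) with all c_j, c'_j > 0, all t_j, t'_j ∈ [t_min, t_max], t_1 < t_2 < ... < t_{M₁}, t'_1 < ... < t'_{M₂}, and M₁ + M₂ ≤ N + 2 with t_1 = t'_1 = t_min. Then the two representations coincide term by term: M₁ = M₂ and (c_j, t_j) = (c'_j, t'_j) for all j. -/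
/-!
Encode a naming `(c, t)` by the finitely supported weight function `pointMasses c t` on `ℝ`.
The difference of the two weight functions is supported on the union of the two node sets,
which share `tmin` and hence have at most `N + 1` points together; its moments of order
`0, …, N` vanish, so it is zero because a square Vandermonde matrix on distinct nodes is
invertible. Equal weight functions with nonzero weights have equal supports, and a finite
subset of a linear order has only one strictly increasing enumeration.
-/

open Finset

section PointMasses

variable {ι α R : Type*} [Fintype ι] [AddCommMonoid R] {c : ι → R} {t : ι → α}

noncomputable def pointMasses (c : ι → R) (t : ι → α) : α →₀ R :=
  ∑ j, Finsupp.single (t j) (c j)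

theorem pointMasses_apply_self (ht : Function.Injective t) (j : ι) :
    pointMasses c t (t j) = c j := by
  classical
  simp only [pointMasses, Finsupp.finsetSum_apply, Finsupp.single_apply, ht.eq_iff]
  simp

theorem support_pointMasses_subset [DecidableEq α] :
    (pointMasses c t).support ⊆ univ.image t :=
  Finsupp.support_finsetSum.trans <| biUnion_subset.2 fun j _ =>
    Finsupp.support_single_subset.trans <| singleton_subset_iff.2 <| mem_image_of_mem t (mem_univ j)

theorem support_pointMasses [DecidableEq α] (ht : Function.Injective t) (hc : ∀ j, c j ≠ 0) :
    (pointMasses c t).support = univ.image t := by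
  refine subset_antisymm support_pointMasses_subset fun s hs => ?_
  obtain ⟨j, -, rfl⟩ := mem_image.1 hs
  simpa [pointMasses_apply_self ht] using hc j

end PointMasses

@[simp]
theorem linearCombination_pointMasses {ι α R M : Type*} [Fintype ι] [Semiring R]
    [AddCommMonoid M] [Module R M] (v : α → M) (c : ι → R) (t : ι → α) :
    Finsupp.linearCombination R v (pointMasses c t) = ∑ j, c j • v (t j) := by
  simp [pointMasses]

theorem Finsupp.eq_zero_of_linearCombination_pow_eq_zero {R : Type*} [CommRing R] [IsDomain R]
    {μ : R →₀ R} {N : ℕ} (hμ : #μ.support ≤ N + 1)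
    (h : ∀ p ≤ N, linearCombination R (· ^ p) μ = 0) : μ = 0 := by
  set e := μ.support.equivFin.symm
  have hv : (fun i => μ (e i)) = 0 := by
    refine Matrix.eq_zero_of_forall_pow_sum_mul_pow_eq_zero (f := fun i => (e i : R))
      (Subtype.val_injective.comp e.injective) fun i => ?_
    rw [← h i (by omega), linearCombination_apply, Finsupp.sum, ← sum_coe_sort μ.support,
      ← e.sum_comp]
    rfl
  ext s
  by_contra hs
  exact hs (by simpa using congrFun hv (e.symm ⟨s, mem_support_iff.2 hs⟩))

theorem eq_of_pointMasses_eq {α R : Type*} [LinearOrder α] [AddCommMonoid R] {M₁ M₂ : ℕ}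
    {c : Fin M₁ → R} {t : Fin M₁ → α} {c' : Fin M₂ → R} {t' : Fin M₂ → α}
    (hst : StrictMono t) (hst' : StrictMono t') (hc : ∀ j, c j ≠ 0) (hc' : ∀ j, c' j ≠ 0)
    (h : pointMasses c t = pointMasses c' t') :
    ∃ hM : M₁ = M₂, ∀ j, c j = c' (Fin.cast hM j) ∧ t j = t' (Fin.cast hM j) := by
  classical
  have himage : univ.image t = univ.image t' := by
    rw [← support_pointMasses hst.injective hc, h, support_pointMasses hst'.injective hc']
  obtain rfl : M₁ = M₂ := by
    simpa [card_image_of_injective _ hst.injective, card_image_of_injective _ hst'.injective]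
      using congrArg card himage
  obtain rfl : t = t' :=
    (hst.range_inj hst').1 (by simpa using congrArg (fun s : Finset α => (s : Set α)) himage)
  refine ⟨rfl, fun j => ⟨?_, rfl⟩⟩
  simpa [pointMasses_apply_self hst.injective] using congrArg (· (t j)) h

theorem nonreducible_naming_unique_anchored_general (N : ℕ) (tmin : ℝ)
    (M₁ M₂ : ℕ) (h1 : 0 < M₁) (h2 : 0 < M₂)
    (hM : M₁ + M₂ ≤ N + 2)
    (c t : Fin M₁ → ℝ) (c' t' : Fin M₂ → ℝ)
    (hc : ∀ j, 0 < c j) (hc' : ∀ j, 0 < c' j)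
    (hst : StrictMono t) (hst' : StrictMono t')
    (ha : t ⟨0, h1⟩ = tmin) (ha' : t' ⟨0, h2⟩ = tmin)
    (heq : ∀ i : Fin (N + 1), ∑ j, c j * t j ^ (i : ℕ) = ∑ j, c' j * t' j ^ (i : ℕ)) :
    ∃ hM : M₁ = M₂, ∀ j : Fin M₁, c j = c' (Fin.cast hM j) ∧ t j = t' (Fin.cast hM j) := by
  classical
  have hnodes : #(univ.image t ∪ univ.image t') ≤ N + 1 := by
    have hshared : 0 < #(univ.image t ∩ univ.image t') :=
      card_pos.2 ⟨tmin, mem_inter.2 ⟨ha ▸ mem_image_of_mem t (mem_univ _),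
        ha' ▸ mem_image_of_mem t' (mem_univ _)⟩⟩
    have hunion := card_union_add_card_inter (univ.image t) (univ.image t')
    rw [card_image_of_injective _ hst.injective, card_image_of_injective _ hst'.injective,
      card_fin, card_fin] at hunion
    omega
  have hsupport : #(pointMasses c t - pointMasses c' t').support ≤ N + 1 :=
    (card_le_card (Finsupp.support_sub.trans
      (union_subset_union support_pointMasses_subset support_pointMasses_subset))).trans hnodes
  have hdiff : pointMasses c t - pointMasses c' t' = 0 :=
    Finsupp.eq_zero_of_linearCombination_pow_eq_zero hsupport fun p hp => by
      simpa [sub_eq_zero] using heq ⟨p, by omega⟩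
  exact eq_of_pointMasses_eq hst hst' (fun j => (hc j).ne') (fun j => (hc' j).ne')
    (sub_eq_zero.1 hdiff)

/-- Uniqueness of non-reducible half-integer namings: two convex combinations of
points on the moment curve, both anchored at `t_min`, with strictly positive
coefficients and strictly increasing parameters, using `M₁ + M₂ ≤ N + 2` terms in
total, that agree on all moments `(1, t, …, t^N)`, coincide term by term. -/
theorem nonreducible_naming_unique_anchored (N : ℕ) (hN : 0 < N) (tmin tmax : ℝ)
    (h : tmin < tmax) (M₁ M₂ : ℕ) (h1 : 0 < M₁) (h2 : 0 < M₂)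
    (hM : M₁ + M₂ ≤ N + 2)
    (c t : Fin M₁ → ℝ) (c' t' : Fin M₂ → ℝ)
    (hc : ∀ j, 0 < c j) (hc' : ∀ j, 0 < c' j)
    (ht : ∀ j, t j ∈ Set.Icc tmin tmax) (ht' : ∀ j, t' j ∈ Set.Icc tmin tmax)
    (hst : StrictMono t) (hst' : StrictMono t')
    (ha : t ⟨0, h1⟩ = tmin) (ha' : t' ⟨0, h2⟩ = tmin)
    (heq : ∀ i : Fin (N + 1), ∑ j, c j * t j ^ (i : ℕ) = ∑ j, c' j * t' j ^ (i : ℕ)) :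
    ∃ hM : M₁ = M₂, ∀ j : Fin M₁, c j = c' (Fin.cast hM j) ∧ t j = t' (Fin.cast hM j) :=
  nonreducible_naming_unique_anchored_general N tmin M₁ M₂ h1 h2 hM c t c' t' hc hc' hst hst' ha ha'
    heq
end

section
/- Let N ≥ 2 be an integer, t_min < t_max, and let M = (N+3)/2 if N is odd, or M = (N+4)/2 if N is even. Suppose v ∈ ℝ^N has an M-point representation as a convex combination Σ_{j=1}^M c_j C_N(t_j) (with t_1 = t_min required if N is even). Then v also has such a representation that is reducible, i.e., where some coefficient is zero or two adjacent parameters coincide. -/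
/-!
If the representation is not already reducible, its nodes are distinct and its weights positive
(except possibly the anchor's). For `N = 2n + 1`, so `M = n + 2`, Gauss quadrature with `n + 1`
nodes for the discrete measure `∑ c_j δ_{t_j}` reproduces all moments up to degree `2n + 1 = N`;
appending a node with weight zero turns it into a reducible representation. For `N = 2n` one uses
Gauss–Radau quadrature with the node `t_min` kept: Gauss quadrature with `n` nodes for the measure
`∑_{j ≥ 1} c_j (t_j - t_min) δ_{t_j}`, divided back by `x - t_min`, reproduces every moment up to
degree `2n`, and the weight left over for `t_min` is nonnegative.

The Gauss nodes for positive weights on `t_0 < ⋯ < t_n` are the roots of the polynomial `P` of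
degree `≤ n` with `c_j P(t_j) = 1 / ∏_{k ≠ j} (t_j - t_k)`. These values alternate in sign, so `P`
has a root in each gap `(t_j, t_{j+1})`, and `∑ c_j P(t_j) g(t_j)` is the coefficient of `X^n` in
`g` (Lagrange interpolation), which vanishes when `deg g < n`.
-/

open Polynomial Finset Lagrange
open Set (Icc Ico Ioo)

theorem Polynomial.exists_mem_Ioo_eval_eq_zero_of_eval_mul_neg (p : ℝ[X]) {a b : ℝ} (hab : a < b)
    (h : p.eval a * p.eval b < 0) : ∃ z ∈ Ioo a b, p.eval z = 0 := by
  have hcont : ContinuousOn (fun x => p.eval x) (Icc a b) := p.continuous.continuousOn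
  rcases mul_neg_iff.1 h with ⟨ha, hb⟩ | ⟨ha, hb⟩
  · exact intermediate_value_Ioo' hab.le hcont ⟨hb, ha⟩
  · exact intermediate_value_Ioo hab.le hcont ⟨ha, hb⟩

theorem Lagrange.nodalWeight_castSucc_mul_nodalWeight_succ_neg {n : ℕ} {t : Fin (n + 1) → ℝ}
    (ht : StrictMono t) (i : Fin n) :
    nodalWeight univ t i.castSucc * nodalWeight univ t i.succ < 0 := by
  have hab : t i.castSucc < t i.succ := ht i.castSucc_lt_succ
  -- no node lies strictly between the consecutive nodes `t i.castSucc` and `t i.succ`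
  have hfar : ∀ k ∈ (univ.erase i.castSucc).erase i.succ,
      0 < (t i.castSucc - t k)⁻¹ * (t i.succ - t k)⁻¹ := by
    intro k hk
    simp only [mem_erase, mem_univ, and_true] at hk
    rcases lt_or_gt_of_ne hk.2 with hka | hak
    · have := ht hka
      exact mul_pos (inv_pos.2 (by linarith)) (inv_pos.2 (by linarith))
    · have hbk : t i.succ < t k := ht (by
        simp only [Fin.lt_def, Fin.val_succ, Fin.val_castSucc, ne_eq, Fin.ext_iff] at hak hk ⊢
        omega)
      exact mul_pos_of_neg_of_neg (inv_lt_zero.2 (by linarith)) (inv_lt_zero.2 (by linarith))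
  rw [nodalWeight, nodalWeight,
    ← mul_prod_erase _ _ (mem_erase.2 ⟨i.castSucc_lt_succ.ne', mem_univ _⟩),
    ← mul_prod_erase _ _ (mem_erase.2 ⟨i.castSucc_lt_succ.ne, mem_univ _⟩),
    erase_right_comm (a := i.succ), mul_mul_mul_comm, ← prod_mul_distrib]
  exact mul_neg_of_neg_of_pos (mul_neg_of_neg_of_pos (inv_lt_zero.2 (sub_neg.2 hab))
    (inv_pos.2 (sub_pos.2 hab))) (prod_pos hfar)

theorem Fin.strictMono_of_mem_Ico {n : ℕ} {t : Fin (n + 1) → ℝ} (ht : Monotone t) {s : Fin n → ℝ}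
    (hs : ∀ i, s i ∈ Ico (t i.castSucc) (t i.succ)) : StrictMono s := fun i j hij =>
  (hs i).2.trans_le ((ht (Fin.succ_le_castSucc_iff.2 hij)).trans (hs j).1)

theorem Lagrange.apply_eq_sum_basis_mul_eval_of_orthogonal {F : Type*} [Field F] {n : ℕ}
    (φ : F[X] →ₗ[F] F) {Q : F[X]} (hQ : Q.Monic) (hQn : Q.natDegree = n) {s : Fin n → F}
    (hs : Function.Injective s) (hQs : ∀ i, Q.eval (s i) = 0)
    (horth : ∀ g : F[X], g.natDegree < n → φ (Q * g) = 0) {f : F[X]} (hf : f.natDegree < 2 * n) :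
    φ f = ∑ i, φ (Lagrange.basis univ s i) * f.eval (s i) := by
  have hrem : (f %ₘ Q).degree < #(univ : Finset (Fin n)) := by
    simpa [degree_eq_natDegree hQ.ne_zero, hQn] using degree_modByMonic_lt f hQ
  have hquot : (f /ₘ Q).natDegree < n := by
    rw [natDegree_divByMonic f hQ, hQn]
    omega
  have hvals : ∀ i, (f %ₘ Q).eval (s i) = f.eval (s i) := fun i => by
    conv_rhs => rw [← modByMonic_add_div f Q]
    simp [hQs]
  calc φ f = φ (f %ₘ Q) + φ (Q * (f /ₘ Q)) := by rw [← map_add, modByMonic_add_div f Q]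
    _ = φ (interpolate univ s fun i => (f %ₘ Q).eval (s i)) := by
      rw [horth _ hquot, add_zero, ← eq_interpolate hs.injOn hrem]
    _ = ∑ i, φ (Lagrange.basis univ s i) * f.eval (s i) := by
      simp only [interpolate_apply, map_sum, C_mul', map_smul, smul_eq_mul, hvals]
      exact sum_congr rfl fun i _ => mul_comm _ _

theorem exists_monic_orthogonal_interlacing {n : ℕ} {c t : Fin (n + 1) → ℝ}
    (hc : ∀ j, 0 < c j) (ht : StrictMono t) :
    ∃ Q : ℝ[X], Q.Monic ∧ Q.natDegree = n ∧
      (∀ g : ℝ[X], g.natDegree < n → ∑ j, c j * (Q * g).eval (t j) = 0) ∧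
      ∃ s : Fin n → ℝ, (∀ i, s i ∈ Ioo (t i.castSucc) (t i.succ)) ∧ ∀ i, Q.eval (s i) = 0 := by
  have hinj : Set.InjOn t (univ : Finset (Fin (n + 1))) := ht.injective.injOn
  set P := interpolate univ t fun j => nodalWeight univ t j / c j
  have hPt : ∀ j, P.eval (t j) = nodalWeight univ t j / c j := fun j =>
    eval_interpolate_at_node _ hinj (mem_univ j)
  have horth : ∀ g : ℝ[X], g.natDegree < n → ∑ j, c j * (P * g).eval (t j) = 0 := by
    intro g hg
    have hcoeff := coeff_eq_sum hinj (P := g) (by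
      rw [card_univ, Fintype.card_fin]
      exact degree_le_natDegree.trans_lt (by exact_mod_cast hg.trans n.lt_succ_self))
    simp only [card_univ, Fintype.card_fin, add_tsub_cancel_right,
      coeff_eq_zero_of_natDegree_lt hg] at hcoeff
    rw [hcoeff]
    refine sum_congr rfl fun j _ => ?_
    rw [eval_mul, hPt, nodalWeight, prod_inv_distrib]
    field_simp [(hc j).ne']
  have hroot : ∀ i : Fin n, ∃ z ∈ Ioo (t i.castSucc) (t i.succ), P.eval z = 0 := fun i =>
    P.exists_mem_Ioo_eval_eq_zero_of_eval_mul_neg (ht i.castSucc_lt_succ) (by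
      rw [hPt, hPt, div_mul_div_comm]
      exact div_neg_of_neg_of_pos (nodalWeight_castSucc_mul_nodalWeight_succ_neg ht i)
        (mul_pos (hc _) (hc _)))
  choose s hs hPs using hroot
  have hP0 : P ≠ 0 := fun h => nodalWeight_ne_zero hinj (mem_univ 0)
    (by simpa [h, (hc 0).ne'] using (hPt 0).symm)
  have hPn : P.natDegree = n := by
    refine le_antisymm ?_ (not_lt.1 fun hlt => hP0 (eq_zero_of_natDegree_lt_card_of_eval_eq_zero P
      (Fin.strictMono_of_mem_Ico ht.monotone fun i => Set.Ioo_subset_Ico_self (hs i)).injective hPs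
      (by simpa using hlt)))
    have hdeg : P.degree < #(univ : Finset (Fin (n + 1))) := degree_interpolate_lt _ hinj
    rw [card_univ, Fintype.card_fin, ← natDegree_lt_iff_degree_lt hP0] at hdeg
    omega
  refine ⟨P * C P.leadingCoeff⁻¹, monic_mul_leadingCoeff_inv hP0,
    by rw [natDegree_mul_leadingCoeff_inv _ hP0, hPn], fun g hg => ?_, s, hs,
    fun i => by simp [hPs]⟩
  rw [mul_assoc]
  exact horth _ ((natDegree_C_mul_le _ _).trans_lt hg)

theorem exists_gauss_quadrature {n : ℕ} {c t : Fin (n + 1) → ℝ} (hc : ∀ j, 0 < c j)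
    (ht : StrictMono t) :
    ∃ w s : Fin n → ℝ, (∀ i, 0 ≤ w i) ∧ (∀ i, s i ∈ Ioo (t i.castSucc) (t i.succ)) ∧
      ∀ f : ℝ[X], f.natDegree < 2 * n → ∑ i, w i * f.eval (s i) = ∑ j, c j * f.eval (t j) := by
  obtain ⟨Q, hQ, hQn, horth, s, hs, hQs⟩ := exists_monic_orthogonal_interlacing hc ht
  set φ : ℝ[X] →ₗ[ℝ] ℝ := ∑ j, c j • leval (t j)
  have hφ : ∀ f, φ f = ∑ j, c j * f.eval (t j) := fun f => by simp [φ]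
  have hsinj : Function.Injective s :=
    (Fin.strictMono_of_mem_Ico ht.monotone fun i => Set.Ioo_subset_Ico_self (hs i)).injective
  have hexact : ∀ f : ℝ[X], f.natDegree < 2 * n →
      φ f = ∑ i, φ (Lagrange.basis univ s i) * f.eval (s i) := fun f =>
    apply_eq_sum_basis_mul_eval_of_orthogonal φ hQ hQn hsinj hQs fun g hg =>
      (hφ _).trans (horth g hg)
  refine ⟨fun i => φ (Lagrange.basis univ s i), s, fun i => ?_, hs, fun f hf => by
    rw [← hφ, hexact f hf]⟩
  -- `w i = φ (L i ^ 2) ≥ 0` for the Lagrange basis polynomial `L i` of the nodes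
  have hsq : (Lagrange.basis univ s i ^ 2).natDegree < 2 * n := by
    rw [natDegree_pow, natDegree_basis hsinj.injOn (mem_univ i), card_univ, Fintype.card_fin]
    have := i.pos
    omega
  have hweight := hexact _ hsq
  rw [sum_eq_single i (fun k _ hki => by simp [eval_basis_of_ne hki.symm (mem_univ k)])
    (by simp), eval_pow, eval_basis_self hsinj.injOn (mem_univ i), one_pow, mul_one] at hweight
  show 0 ≤ φ _
  rw [← hweight, hφ]
  exact sum_nonneg fun j _ => mul_nonneg (hc j).le (by rw [eval_pow]; exact sq_nonneg _)

theorem Fin.snoc_last_mem_Icc_of_mem_Ico {m : ℕ} {t : Fin (m + 1) → ℝ} (ht : Monotone t)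
    {s : Fin m → ℝ} (hs : ∀ i, s i ∈ Ico (t i.castSucc) (t i.succ)) (j : Fin (m + 1)) :
    (Fin.snoc s (t (Fin.last m)) : Fin (m + 1) → ℝ) j ∈ Icc (t j) (t (Fin.last m)) := by
  induction j using Fin.lastCases with
  | last => simp
  | cast i =>
    rw [Fin.snoc_castSucc]
    exact ⟨(hs i).1, (hs i).2.le.trans (ht (Fin.le_last _))⟩

theorem Fin.monotone_snoc_last_of_mem_Ico {m : ℕ} {t : Fin (m + 1) → ℝ} (ht : Monotone t)
    {s : Fin m → ℝ} (hs : ∀ i, s i ∈ Ico (t i.castSucc) (t i.succ)) :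
    Monotone (Fin.snoc s (t (Fin.last m)) : Fin (m + 1) → ℝ) :=
  Fin.monotone_iff_le_succ.2 fun i => by
    rw [Fin.snoc_castSucc]
    exact (hs i).2.le.trans (snoc_last_mem_Icc_of_mem_Ico ht hs i.succ).1

theorem Fin.sum_snoc_zero_mul {m : ℕ} (w s : Fin m → ℝ) (b : ℝ) (g : ℝ → ℝ) :
    ∑ j, (Fin.snoc w 0 : Fin (m + 1) → ℝ) j * g ((Fin.snoc s b : Fin (m + 1) → ℝ) j) =
      ∑ i, w i * g (s i) := by
  simp [Fin.sum_univ_castSucc]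

theorem exists_radau_quadrature {n : ℕ} {c t : Fin (n + 2) → ℝ} (hc0 : 0 ≤ c 0)
    (hc : ∀ j : Fin (n + 1), 0 < c j.succ) (ht : StrictMono t) :
    ∃ w s : Fin (n + 1) → ℝ, (∀ i, 0 ≤ w i) ∧ s 0 = t 0 ∧
      (∀ i, s i ∈ Ico (t i.castSucc) (t i.succ)) ∧
      ∀ f : ℝ[X], f.natDegree ≤ 2 * n → ∑ i, w i * f.eval (s i) = ∑ j, c j * f.eval (t j) := by
  set a := t 0
  obtain ⟨w, s, hw, hs, hexact⟩ := exists_gauss_quadrature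
    (c := fun j => c j.succ * (t j.succ - a)) (t := fun j => t j.succ)
    (fun j => mul_pos (hc j) (sub_pos.2 (ht j.succ_pos))) (ht.comp (Fin.strictMono_succ))
  have has : ∀ i, a < s i := fun i => (ht (Fin.succ_pos _)).trans (hs i).1
  have hshift : ∀ f : ℝ[X], f.natDegree ≤ 2 * n →
      ∑ i, w i / (s i - a) * (f.eval (s i) - f.eval a) =
        ∑ j : Fin (n + 1), c j.succ * (f.eval (t j.succ) - f.eval a) := by
    intro f hf
    obtain ⟨g, hg⟩ := X_sub_C_dvd_sub_C_eval (a := a) (p := f)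
    have hfg : ∀ x, f.eval x - f.eval a = (x - a) * g.eval x := fun x => by
      simpa using congrArg (eval x) hg
    rcases eq_or_ne g 0 with rfl | hg0
    · simp [hfg]
    have hgdeg : g.natDegree < 2 * n := by
      have := congrArg natDegree hg
      rw [natDegree_mul (X_sub_C_ne_zero a) hg0, natDegree_X_sub_C] at this
      have := natDegree_sub_le f (C (f.eval a))
      rw [natDegree_C] at this
      omega
    calc ∑ i, w i / (s i - a) * (f.eval (s i) - f.eval a) = ∑ i, w i * g.eval (s i) := by
          refine sum_congr rfl fun i _ => ?_
          rw [hfg, ← mul_assoc, div_mul_cancel₀ _ (sub_pos.2 (has i)).ne']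
      _ = ∑ j, c j.succ * (t j.succ - a) * g.eval (t j.succ) := hexact g hgdeg
      _ = _ := sum_congr rfl fun j _ => by rw [hfg, mul_assoc]
  have hsum : ∑ i, w i / (s i - a) ≤ ∑ j : Fin (n + 1), c j.succ := by
    -- test `hshift` against `∏ i, (X - s i) ^ 2`, which vanishes at the nodes `s i`
    have hRa : 0 < (nodal univ s).eval a ^ 2 := by
      rw [eval_nodal]
      exact pow_two_pos_of_ne_zero (prod_ne_zero_iff.2 fun i _ => sub_ne_zero.2 (has i).ne)
    have hR := hshift (nodal univ s ^ 2)
      (by rw [natDegree_pow, natDegree_nodal, card_univ, Fintype.card_fin, mul_comm])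
    simp only [eval_pow, eval_nodal_at_node (mem_univ _), zero_pow two_ne_zero, zero_sub, mul_neg,
      sum_neg_distrib, mul_sub, sum_sub_distrib, ← sum_mul] at hR
    have hkey : (nodal univ s).eval a ^ 2 * (∑ j : Fin (n + 1), c j.succ - ∑ i, w i / (s i - a)) =
        ∑ j : Fin (n + 1), c j.succ * (nodal univ s).eval (t j.succ) ^ 2 := by
      linear_combination hR
    have := nonneg_of_mul_nonneg_right (hkey ▸ sum_nonneg fun j _ =>
      mul_nonneg (hc j).le (sq_nonneg _)) hRa
    linarith
  refine ⟨Fin.cons (∑ j, c j - ∑ i, w i / (s i - a)) fun i => w i / (s i - a), Fin.cons a s,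
    fun i => ?_, rfl, fun i => ?_, fun f hf => ?_⟩
  · cases i using Fin.cases with
    | zero =>
      rw [Fin.cons_zero, Fin.sum_univ_succ]
      linarith
    | succ i => exact div_nonneg (hw i) (sub_pos.2 (has i)).le
  · cases i using Fin.cases with
    | zero => exact ⟨le_rfl, ht (Fin.succ_pos 0)⟩
    | succ i =>
      rw [Fin.cons_succ, ← Fin.succ_castSucc]
      exact Set.Ioo_subset_Ico_self (hs i)
  · have h := hshift f hf
    simp only [mul_sub, sum_sub_distrib, ← sum_mul] at h
    rw [Fin.sum_univ_succ, Fin.sum_univ_succ (fun j => c j * f.eval (t j)), Fin.sum_univ_succ c]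
    simp only [Fin.cons_zero, Fin.cons_succ]
    linear_combination h

theorem exists_reducible_quadrature {N m : ℕ}
    (hm : m + 1 = if Odd N then (N + 3) / 2 else (N + 4) / 2) {c t : Fin (m + 1) → ℝ}
    (hc : ∀ j, 0 ≤ c j) (hcpos : ∀ j, (Even N → j ≠ 0) → 0 < c j) (ht : StrictMono t) :
    ∃ c' t' : Fin (m + 1) → ℝ, (∀ j, 0 ≤ c' j) ∧ c' (Fin.last m) = 0 ∧ Monotone t' ∧
      (∀ j, t' j ∈ Icc (t 0) (t (Fin.last m))) ∧ (Even N → t' 0 = t 0) ∧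
      ∀ f : ℝ[X], f.natDegree ≤ N → ∑ j, c' j * f.eval (t' j) = ∑ j, c j * f.eval (t j) := by
  suffices h : ∃ w s : Fin m → ℝ, (∀ i, 0 ≤ w i) ∧ (∀ i, s i ∈ Ico (t i.castSucc) (t i.succ)) ∧
      (Even N → (Fin.snoc s (t (Fin.last m)) : Fin (m + 1) → ℝ) 0 = t 0) ∧
      ∀ f : ℝ[X], f.natDegree ≤ N → ∑ i, w i * f.eval (s i) = ∑ j, c j * f.eval (t j) by
    obtain ⟨w, s, hw, hs, hanchor, hexact⟩ := h
    refine ⟨Fin.snoc w 0, Fin.snoc s (t (Fin.last m)), fun j => ?_, by simp,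
      Fin.monotone_snoc_last_of_mem_Ico ht.monotone hs, fun j => ?_, hanchor, fun f hf => ?_⟩
    · induction j using Fin.lastCases <;> simp [hw]
    · exact Set.Icc_subset_Icc_left (ht.monotone (Fin.zero_le j))
        (Fin.snoc_last_mem_Icc_of_mem_Ico ht.monotone hs j)
    · exact (Fin.sum_snoc_zero_mul w s _ fun x => f.eval x).trans (hexact f hf)
  obtain ⟨n, rfl | rfl⟩ := Nat.even_or_odd' N
  · have hN : ¬Odd (2 * n) := Nat.not_odd_iff_even.2 (even_two_mul n)
    obtain rfl : m = n + 1 := by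
      rw [if_neg hN] at hm
      omega
    obtain ⟨w, s, hw, hs0, hs, hexact⟩ :=
      exists_radau_quadrature (hc 0) (fun j => hcpos _ fun _ => Fin.succ_ne_zero j) ht
    exact ⟨w, s, hw, hs, fun _ => (Fin.snoc_castSucc (α := fun _ => ℝ) _ s 0).trans hs0, hexact⟩
  · have hN : Odd (2 * n + 1) := odd_two_mul_add_one n
    obtain rfl : m = n + 1 := by
      rw [if_pos hN] at hm
      omega
    have hodd : ¬Even (2 * n + 1) := Nat.not_even_iff_odd.2 hN
    obtain ⟨w, s, hw, hs, hexact⟩ := exists_gauss_quadrature (fun j => hcpos j hodd.elim) ht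
    exact ⟨w, s, hw, fun i => Set.Ioo_subset_Ico_self (hs i), hodd.elim,
      fun f hf => hexact f (by omega)⟩

/-- Existence of reducible namings: for `N ≥ 2` and `M = (N+3)/2` (`N` odd) or
`(N+4)/2` (`N` even), any point `v` with an `M`-point representation (anchored at
`t_min` when `N` is even) also has such a representation that is reducible: some
coefficient (not the anchor's, when `N` is even) is zero, or two adjacent
parameters coincide. -/
theorem exists_reducible_rep (N : ℕ) (tmin tmax : ℝ)
    (M : ℕ) (hM : M = if Odd N then (N + 3) / 2 else (N + 4) / 2) (hMpos : 0 < M)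
    (v : Fin N → ℝ) (c t : Fin M → ℝ)
    (hc : ∀ j, 0 ≤ c j) (hs : ∑ j, c j = 1)
    (ht : ∀ j, t j ∈ Set.Icc tmin tmax) (hmono : Monotone t)
    (hanchor : Even N → t ⟨0, hMpos⟩ = tmin)
    (hv : ∀ i : Fin N, ∑ j, c j * t j ^ ((i : ℕ) + 1) = v i) :
    ∃ c' t' : Fin M → ℝ,
      (∀ j, 0 ≤ c' j) ∧ (∑ j, c' j = 1) ∧ (∀ j, t' j ∈ Set.Icc tmin tmax) ∧
      Monotone t' ∧ (Even N → t' ⟨0, hMpos⟩ = tmin) ∧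
      (∀ i : Fin N, ∑ j, c' j * t' j ^ ((i : ℕ) + 1) = v i) ∧
      ((∃ j : Fin M, (Even N → (j : ℕ) ≠ 0) ∧ c' j = 0) ∨
        ∃ (j : ℕ) (h1 : j + 1 < M), t' ⟨j, by omega⟩ = t' ⟨j + 1, h1⟩) := by
  obtain ⟨m, rfl⟩ : ∃ m, M = m + 1 := ⟨M - 1, by omega⟩
  by_cases hred : (∃ j : Fin (m + 1), (Even N → (j : ℕ) ≠ 0) ∧ c j = 0) ∨
      ∃ (j : ℕ) (h1 : j + 1 < m + 1), t ⟨j, by omega⟩ = t ⟨j + 1, h1⟩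
  · exact ⟨c, t, hc, hs, ht, hmono, hanchor, hv, hred⟩
  push Not at hred
  have hstrict : StrictMono t := Fin.strictMono_iff_lt_succ.2 fun i =>
    (hmono i.castSucc_le_succ).lt_of_ne (hred.2 i i.succ.isLt)
  obtain ⟨c', t', hc', hlast, hmono', hmem, hanchor', hexact⟩ := exists_reducible_quadrature hM hc
    (fun j hj => (hc j).lt_of_ne' (hred.1 j fun hN h0 => hj hN (Fin.ext h0))) hstrict
  refine ⟨c', t', hc', ?_, fun j => Set.Icc_subset_Icc (ht 0).1 (ht _).2 (hmem j), hmono',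
    fun hN => (hanchor' hN).trans (hanchor hN), fun i => ?_,
    Or.inl ⟨Fin.last m, fun hN => ?_, hlast⟩⟩
  · simpa [hs] using hexact 1 (by simp)
  · simpa [hv] using hexact (X ^ ((i : ℕ) + 1)) (by rw [natDegree_X_pow]; omega)
  · rw [if_neg (Nat.not_odd_iff_even.2 hN)] at hM
    simp only [Fin.val_last]
    omega
end

section
/- Let N be a positive integer, t_min < t_max, M = (N+1)/2 if N is odd or (N+2)/2 if N is even. Consider the evaluation map F from the set Nam_N of namings (c_1,...,c_M,t_1,...,t_M) (with c_j ≥ 0, Σc_j = 1, t_min ≤ t_1 ≤ ... ≤ t_M ≤ t_max, and t_1 = t_min if N even) to ℝ^N given by F = Σ c_j C_N(t_j). Then the image of F equals the convex hull of the curve C_N([t_min, t_max]). -/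
/-!
A naming is a convex combination of points of the curve, so the image lies in the hull.
Conversely, a point of the hull is the vector of moments `1, …, N` of a probability measure `μ`
with finitely many atoms in `[tmin, tmax]`, and it suffices to find a measure with at most
`M = N / 2 + 1` atoms, one of them at `tmin` when `N` is even, having the same moments of order
`≤ N`. If `μ` has few atoms it is such a measure itself. Otherwise Gaussian quadrature for `μ`
(for `N = 2m - 1`: the `m` roots of the orthogonal polynomial of degree `m`, exact up to degree
`2m - 1`) or Gauss–Radau quadrature anchored at `tmin` (for `N = 2m`: `tmin` together with the
Gauss nodes of `(t - tmin) dμ`, exact up to degree `2m`) provides one; its weights are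
nonnegative because it is exact on the square of the node polynomial with one node omitted.
-/

open Polynomial Finset Set

theorem exists_finset_sum_smul_eq_of_mem_convexHull_image {α E : Type*} [AddCommGroup E]
    [Module ℝ E] {γ : α → E} {s : Set α} {x : E} (hx : x ∈ convexHull ℝ (γ '' s)) :
    ∃ (T : Finset α) (w : α → ℝ), (∀ a ∈ T, a ∈ s) ∧ (∀ a ∈ T, 0 < w a) ∧
      ∑ a ∈ T, w a = 1 ∧ ∑ a ∈ T, w a • γ a = x := by
  classical
  obtain ⟨ι, _, w, z, hw0, hw1, hz, rfl⟩ := mem_convexHull_iff_exists_fintype.mp hx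
  choose σ hσs hσ using hz
  -- merge the indices carrying the same point of `s`, after dropping those of weight zero
  let I := univ.filter fun i => w i ≠ 0
  let W : α → ℝ := fun a => ∑ i ∈ I with σ i = a, w i
  have hmerge : ∀ F : α → E, ∑ a ∈ I.image σ, W a • F a = ∑ i ∈ I, w i • F (σ i) :=
    fun F => sum_image' _ fun i _ => by
      rw [sum_smul]
      exact sum_congr rfl fun j hj => by rw [(mem_filter.mp hj).2]
  have hdrop : ∀ F : ι → E, ∑ i ∈ I, w i • F i = ∑ i, w i • F i :=
    fun F => sum_filter_of_ne fun i _ h => left_ne_zero_of_smul h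
  refine ⟨I.image σ, W, fun a ha => ?_, fun a ha => ?_, ?_, ?_⟩
  · obtain ⟨i, -, rfl⟩ := mem_image.mp ha
    exact hσs i
  · obtain ⟨i, hi, rfl⟩ := mem_image.mp ha
    refine sum_pos' (fun j hj => hw0 j) ⟨i, mem_filter.mpr ⟨hi, rfl⟩, ?_⟩
    exact (hw0 i).lt_of_ne (mem_filter.mp hi).2.symm
  · rw [sum_image' (g := σ) w fun i _ => rfl, sum_filter_ne_zero, hw1]
  · simpa [hσ] using (hmerge γ).trans (hdrop fun i => γ (σ i))

namespace Polynomial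

theorem card_roots_toFinset_le {R : Type*} [CommRing R] [IsDomain R] [DecidableEq R]
    (p : R[X]) : p.roots.toFinset.card ≤ p.natDegree :=
  (Multiset.toFinset_card_le _).trans (card_roots' p)

theorem eval_mul_eval_pos_of_roots_eq_zero {g : ℝ[X]} (hg : g ≠ 0) (hroots : g.roots = 0)
    (x y : ℝ) : 0 < g.eval x * g.eval y := by
  have hne : ∀ z, g.eval z ≠ 0 := fun z hz => by
    simpa [hroots] using (mem_roots hg).mpr hz
  refine lt_of_le_of_ne (not_lt.mp fun hneg => ?_) (mul_ne_zero (hne x) (hne y)).symm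
  have h0 : (0 : ℝ) ∈ uIcc (g.eval x) (g.eval y) := by
    rcases mul_neg_iff.mp hneg with ⟨h1, h2⟩ | ⟨h1, h2⟩
    · exact mem_uIcc.mpr (Or.inr ⟨h2.le, h1.le⟩)
    · exact mem_uIcc.mpr (Or.inl ⟨h1.le, h2.le⟩)
  obtain ⟨z, -, hz⟩ := intermediate_value_uIcc g.continuous.continuousOn h0
  exact hne z hz

theorem eval_mul_eval_nonneg_of_even_count_roots {P : ℝ[X]} {a b : ℝ}
    (heven : ∀ r ∈ Ioo a b, Even (P.roots.count r)) {x y : ℝ} (hx : x ∈ Icc a b)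
    (hy : y ∈ Icc a b) : 0 ≤ P.eval x * P.eval y := by
  obtain ⟨g, hPg, -, hg⟩ := P.exists_prod_multiset_X_sub_C_mul
  rcases eq_or_ne g 0 with rfl | hg0
  · rw [← hPg, mul_zero]; simp
  have hfactor : P.eval x * P.eval y = (g.eval x * g.eval y) *
      ∏ r ∈ P.roots.toFinset, ((x - r) * (y - r)) ^ P.roots.count r := by
    rw [← prod_multiset_map_count, Multiset.prod_map_mul]
    conv_lhs => rw [← hPg]
    rw [eval_mul, eval_mul, eval_multiset_prod, eval_multiset_prod, Multiset.map_map,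
      Multiset.map_map]
    simp only [Function.comp_apply, eval_sub, eval_X, eval_C]
    ring
  rw [hfactor]
  refine mul_nonneg (eval_mul_eval_pos_of_roots_eq_zero hg0 hg x y).le
    (prod_nonneg fun r _ => ?_)
  by_cases hr : r ∈ Ioo a b
  · exact (heven r hr).pow_nonneg _
  · refine pow_nonneg ?_ _
    rcases not_and_or.mp hr with hr | hr <;> push Not at hr
    · nlinarith [hx.1, hy.1]
    · nlinarith [hx.2, hy.2]

/-- `B` collects the roots of odd multiplicity of `p` in `(a, b)`, where `p` changes sign. -/
theorem exists_sign_change_roots {p : ℝ[X]} (hp : p ≠ 0) (a b : ℝ) :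
    ∃ B : Finset ℝ, (∀ r ∈ B, p.IsRoot r ∧ r ∈ Ioo a b) ∧ ∀ x ∈ Icc a b, ∀ y ∈ Icc a b,
      0 ≤ (p * ∏ r ∈ B, (X - C r)).eval x * (p * ∏ r ∈ B, (X - C r)).eval y := by
  set B := p.roots.toFinset.filter fun r => r ∈ Ioo a b ∧ Odd (p.roots.count r)
  refine ⟨B, fun r hr => ⟨(mem_roots hp).mp (Multiset.mem_toFinset.mp (mem_filter.mp hr).1),
    (mem_filter.mp hr).2.1⟩, fun x hx y hy => eval_mul_eval_nonneg_of_even_count_roots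
      (fun r hr => ?_) hx hy⟩
  have hq0 : ∏ r ∈ B, (X - C r) ≠ 0 := (monic_prod_of_monic _ _ fun r _ => monic_X_sub_C r).ne_zero
  rw [roots_mul (mul_ne_zero hp hq0), roots_prod_X_sub_C, Multiset.count_add,
    Multiset.count_eq_of_nodup B.nodup]
  simp only [Finset.mem_val]
  by_cases hodd : Odd (p.roots.count r)
  · have hrB : r ∈ B := mem_filter.mpr
      ⟨Multiset.mem_toFinset.mpr (Multiset.count_pos.mp hodd.pos), hr, hodd⟩
    rw [if_pos hrB]
    exact hodd.add_one
  · rw [if_neg fun h => hodd (mem_filter.mp h).2.2, add_zero]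
    exact Nat.not_odd_iff_even.mp hodd

theorem exists_monic_orthogonal (T : Finset ℝ) {w : ℝ → ℝ} (hw : ∀ s ∈ T, 0 < w s) {m : ℕ}
    (hm : m ≤ T.card) :
    ∃ p : ℝ[X], p.Monic ∧ p.natDegree = m ∧
      ∀ q : ℝ[X], q.natDegree < m → ∑ s ∈ T, w s * (p.eval s * q.eval s) = 0 := by
  let toPoly : (Fin (m + 1) → ℝ) →ₗ[ℝ] ℝ[X] :=
    (degreeLT ℝ (m + 1)).subtype ∘ₗ (degreeLTEquiv ℝ (m + 1)).symm.toLinearMap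
  let φ : (Fin (m + 1) → ℝ) →ₗ[ℝ] Fin m → ℝ :=
    LinearMap.pi fun i => ∑ s ∈ T, (w s * s ^ (i : ℕ)) • (leval s ∘ₗ toPoly)
  -- `m + 1` coefficients against `m` conditions of orthogonality to `1, X, …, X ^ (m - 1)`
  obtain ⟨c, hc, hc0⟩ := (Submodule.ne_bot_iff _).mp (φ.ker_ne_bot_of_finrank_lt (by simp))
  have hp₀deg : toPoly c ∈ degreeLT ℝ (m + 1) := ((degreeLTEquiv ℝ (m + 1)).symm c).2
  have hp₀ : toPoly c ≠ 0 := fun h => hc0 (by simpa [toPoly] using h)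
  set p₀ := toPoly c
  have hmonomial : ∀ i < m, ∑ s ∈ T, w s * (p₀.eval s * s ^ i) = 0 := fun i hi => by
    have := congrFun (LinearMap.mem_ker.mp hc) ⟨i, hi⟩
    simpa [φ, p₀, mul_comm, mul_left_comm, mul_assoc] using this
  have horth : ∀ q : ℝ[X], q.natDegree < m → ∑ s ∈ T, w s * (p₀.eval s * q.eval s) = 0 := by
    intro q hq
    simp_rw [eval_eq_sum_range' hq, mul_sum]
    rw [sum_comm]
    refine sum_eq_zero fun i hi => ?_
    rw [← mul_zero (q.coeff i), ← hmonomial i (Finset.mem_range.mp hi), mul_sum]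
    exact sum_congr rfl fun s _ => by ring
  have hdeg : p₀.natDegree = m := by
    rw [degreeLT_succ_eq_degreeLE, mem_degreeLE] at hp₀deg
    refine (natDegree_le_of_degree_le hp₀deg).antisymm (not_lt.mp fun hlt => hp₀ ?_)
    have hsq := (sum_eq_zero_iff_of_nonneg fun s hs =>
      mul_nonneg (hw s hs).le (mul_self_nonneg (p₀.eval s))).mp (horth p₀ hlt)
    refine eq_zero_of_natDegree_lt_card_of_eval_eq_zero' p₀ T (fun s hs => ?_) (hlt.trans_le hm)
    exact mul_self_eq_zero.mp ((mul_eq_zero.mp (hsq s hs)).resolve_left (hw s hs).ne')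
  refine ⟨p₀ * C p₀.leadingCoeff⁻¹, monic_mul_leadingCoeff_inv hp₀, ?_, fun q hq => ?_⟩
  · rw [natDegree_mul_C (inv_ne_zero (leadingCoeff_ne_zero.mpr hp₀)), hdeg]
  · rw [← mul_zero p₀.leadingCoeff⁻¹, ← horth q hq, mul_sum]
    exact sum_congr rfl fun s _ => by rw [eval_mul, eval_C]; ring

theorem exists_roots_mem_Ioo_of_orthogonal {T : Finset ℝ} {w : ℝ → ℝ} (hw : ∀ s ∈ T, 0 < w s)
    {a b : ℝ} (hT : ∀ s ∈ T, s ∈ Icc a b) {m : ℕ} (hm : m + 1 ≤ T.card) {p : ℝ[X]}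
    (hp0 : p ≠ 0) (hdeg : p.natDegree = m)
    (horth : ∀ q : ℝ[X], q.natDegree < m → ∑ s ∈ T, w s * (p.eval s * q.eval s) = 0) :
    ∃ R : Finset ℝ, R.card = m ∧ ∀ r ∈ R, p.IsRoot r ∧ r ∈ Ioo a b := by
  obtain ⟨B, hB, hsign⟩ := exists_sign_change_roots hp0 a b
  have hBle : B.card ≤ m := hdeg ▸ (Finset.card_le_card fun r hr => Multiset.mem_toFinset.mpr
    ((mem_roots hp0).mpr (hB r hr).1)).trans (card_roots_toFinset_le p)
  refine ⟨B, hBle.antisymm (not_lt.mp fun hlt => ?_), hB⟩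
  set q : ℝ[X] := ∏ r ∈ B, (X - C r)
  -- `p * q` does not change sign on `[a, b]`, yet `∑ w (p q) = 0`: it vanishes on `T`
  have hvanish : ∀ s ∈ T, (p * q).eval s = 0 := by
    intro s₀ hs₀
    have hsum : ∑ s ∈ T, w s * ((p * q).eval s * (p * q).eval s₀) = 0 := by
      rw [← mul_zero ((p * q).eval s₀), ← horth q
        ((natDegree_multiset_prod_X_sub_C_eq_card B.val).trans_lt hlt), mul_sum]
      exact sum_congr rfl fun s _ => by rw [eval_mul]; ring
    have h := (sum_eq_zero_iff_of_nonneg fun s hs => mul_nonneg (hw s hs).le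
      (hsign s (hT s hs) s₀ (hT s₀ hs₀))).mp hsum s₀ hs₀
    exact mul_self_eq_zero.mp ((mul_eq_zero.mp h).resolve_left (hw s₀ hs₀).ne')
  have hTroots : T ⊆ p.roots.toFinset := by
    intro s hs
    rw [Multiset.mem_toFinset, mem_roots hp0]
    have hpq := hvanish s hs
    rw [eval_mul, eval_prod, mul_eq_zero, prod_eq_zero_iff] at hpq
    rcases hpq with hp | ⟨r, hrB, hr⟩
    · exact hp
    · rw [eval_sub, eval_X, eval_C, sub_eq_zero] at hr
      exact hr ▸ (hB r hrB).1
  have := (Finset.card_le_card hTroots).trans (card_roots_toFinset_le p)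
  omega

end Polynomial

theorem sum_mul_eval_eq_sum_lagrange_basis (T R : Finset ℝ) (w : ℝ → ℝ) {f : ℝ[X]}
    (hf : f.degree < R.card) :
    ∑ s ∈ T, w s * f.eval s =
      ∑ r ∈ R, (∑ s ∈ T, w s * (Lagrange.basis R id r).eval s) * f.eval r := by
  have hf_eq := Lagrange.eq_interpolate (s := R) (v := id) (injOn_id _) hf
  calc ∑ s ∈ T, w s * f.eval s
      = ∑ s ∈ T, ∑ r ∈ R, f.eval r * (w s * (Lagrange.basis R id r).eval s) := by
        refine sum_congr rfl fun s _ => ?_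
        conv_lhs => rw [hf_eq]
        simp only [Lagrange.interpolate_apply, eval_finsetSum, eval_mul, eval_C, id, mul_sum]
        exact sum_congr rfl fun r _ => by ring
    _ = _ := by
        rw [sum_comm]
        exact sum_congr rfl fun r _ => by rw [← mul_sum, mul_comm]

theorem quadrature_weight_nonneg {T R : Finset ℝ} {w v : ℝ → ℝ} (hw : ∀ s ∈ T, 0 ≤ w s)
    (hexact : ∀ f : ℝ[X], f.natDegree ≤ 2 * (R.card - 1) →
      ∑ s ∈ T, w s * f.eval s = ∑ r ∈ R, v r * f.eval r) {r : ℝ} (hr : r ∈ R) : 0 ≤ v r := by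
  let q : ℝ[X] := ∏ r' ∈ R.erase r, (X - C r')
  have hqdeg : q.natDegree = R.card - 1 :=
    (natDegree_multiset_prod_X_sub_C_eq_card _).trans (card_erase_of_mem hr)
  have hq := hexact (q ^ 2) (by rw [natDegree_pow, hqdeg])
  rw [sum_eq_single_of_mem r hr fun r' hr' hne => by
    rw [eval_pow, eval_prod, prod_eq_zero (mem_erase.mpr ⟨hne, hr'⟩) (by simp),
      zero_pow two_ne_zero, mul_zero]] at hq
  have hqr : 0 < (q ^ 2).eval r := by
    rw [eval_pow]
    exact sq_pos_of_ne_zero (by simp [q, eval_prod, prod_eq_zero_iff, sub_eq_zero])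
  refine nonneg_of_mul_nonneg_left (hq ▸ sum_nonneg fun s hs => ?_) hqr
  exact mul_nonneg (hw s hs) (by rw [eval_pow]; positivity)

theorem exists_gauss_quadrature_s13 {T : Finset ℝ} {w : ℝ → ℝ} (hw : ∀ s ∈ T, 0 < w s) {a b : ℝ}
    (hT : ∀ s ∈ T, s ∈ Icc a b) {m : ℕ} (hm : m + 1 ≤ T.card) :
    ∃ (R : Finset ℝ) (v : ℝ → ℝ), R.card = m ∧ (∀ r ∈ R, r ∈ Ioo a b) ∧ (∀ r ∈ R, 0 ≤ v r) ∧
      ∀ f : ℝ[X], f.natDegree < 2 * m →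
        ∑ s ∈ T, w s * f.eval s = ∑ r ∈ R, v r * f.eval r := by
  obtain ⟨p, hmonic, hdeg, horth⟩ := exists_monic_orthogonal T hw (by omega : m ≤ T.card)
  obtain ⟨R, hRcard, hR⟩ := exists_roots_mem_Ioo_of_orthogonal hw hT hm hmonic.ne_zero hdeg horth
  let v : ℝ → ℝ := fun r => ∑ s ∈ T, w s * (Lagrange.basis R id r).eval s
  -- divide by `p`: the quotient is orthogonal to `p`, the remainder is interpolated at its roots
  have hexact : ∀ f : ℝ[X], f.natDegree < 2 * m →
      ∑ s ∈ T, w s * f.eval s = ∑ r ∈ R, v r * f.eval r := by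
    intro f hf
    have hdiv := modByMonic_add_div f p
    have hquot : (f /ₘ p).natDegree < m := by rw [natDegree_divByMonic f hmonic, hdeg]; omega
    have hrem : (f %ₘ p).degree < R.card := by
      simpa [degree_eq_natDegree hmonic.ne_zero, hdeg, hRcard] using degree_modByMonic_lt f hmonic
    calc ∑ s ∈ T, w s * f.eval s
        = ∑ s ∈ T, w s * (p.eval s * (f /ₘ p).eval s) + ∑ s ∈ T, w s * (f %ₘ p).eval s := by
          rw [← sum_add_distrib]
          refine sum_congr rfl fun s _ => ?_
          conv_lhs => rw [← hdiv]
          rw [eval_add, eval_mul]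
          ring
      _ = ∑ r ∈ R, v r * (f %ₘ p).eval r := by
          rw [horth _ hquot, zero_add, sum_mul_eval_eq_sum_lagrange_basis T R w hrem]
      _ = ∑ r ∈ R, v r * f.eval r := sum_congr rfl fun r hr => by
          conv_rhs => rw [← hdiv]
          rw [eval_add, eval_mul, (hR r hr).1.eq_zero, zero_mul, add_zero]
  refine ⟨R, v, hRcard, fun r hr => (hR r hr).2, fun r hr => ?_, hexact⟩
  have hR0 : 0 < R.card := card_pos.mpr ⟨r, hr⟩
  exact quadrature_weight_nonneg (fun s hs => (hw s hs).le) (fun f hf => hexact f (by omega)) hr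

/-- Writing `f = f(a) + (X - a) g`, a rule for `(s - a) w(s)` integrates `g`, and the mass of `w`
is adjusted at the new node `a`. -/
theorem exists_quadrature_insert {T U : Finset ℝ} {w u : ℝ → ℝ} {a : ℝ} (haU : a ∉ U) {d : ℕ}
    (hexact : ∀ g : ℝ[X], g.natDegree < d →
      ∑ s ∈ T.erase a, w s * (s - a) * g.eval s = ∑ r ∈ U, u r * g.eval r) :
    ∃ v : ℝ → ℝ, ∀ f : ℝ[X], f.natDegree ≤ d →
      ∑ s ∈ T, w s * f.eval s = ∑ r ∈ insert a U, v r * f.eval r := by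
  have hsub : ∀ r ∈ U, r - a ≠ 0 := fun r hr => sub_ne_zero.mpr (ne_of_mem_of_not_mem hr haU)
  let v : ℝ → ℝ := fun r =>
    if r = a then ∑ s ∈ T, w s - ∑ r ∈ U, u r / (r - a) else u r / (r - a)
  have hva : v a = ∑ s ∈ T, w s - ∑ r ∈ U, u r / (r - a) := if_pos rfl
  have hvU : ∀ r ∈ U, v r = u r / (r - a) := fun r hr => if_neg (ne_of_mem_of_not_mem hr haU)
  refine ⟨v, fun f hf => ?_⟩
  obtain ⟨g, hg⟩ := X_sub_C_dvd_sub_C_eval (a := a) (p := f)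
  have hfg : ∀ x, f.eval x = f.eval a + (x - a) * g.eval x := fun x => by
    have := congrArg (eval x) hg
    simp only [eval_sub, eval_mul, eval_C, eval_X] at this
    linarith
  have hgsum : ∑ s ∈ T.erase a, w s * (s - a) * g.eval s = ∑ r ∈ U, u r * g.eval r := by
    rcases eq_or_ne g 0 with rfl | hg0
    · simp
    refine hexact g ?_
    have := congrArg natDegree hg
    rw [natDegree_sub_C, natDegree_mul (X_sub_C_ne_zero a) hg0, natDegree_X_sub_C] at this
    omega
  have hUsum : ∑ r ∈ U, v r * f.eval r
      = (∑ r ∈ U, u r / (r - a)) * f.eval a + ∑ r ∈ U, u r * g.eval r := by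
    rw [sum_mul, ← sum_add_distrib]
    refine sum_congr rfl fun r hr => ?_
    rw [hvU r hr, hfg r, mul_add, ← mul_assoc, div_mul_cancel₀ _ (hsub r hr)]
  calc ∑ s ∈ T, w s * f.eval s
      = (∑ s ∈ T, w s) * f.eval a + ∑ s ∈ T.erase a, w s * (s - a) * g.eval s := by
        rw [sum_erase _ (by simp), sum_mul, ← sum_add_distrib]
        exact sum_congr rfl fun s _ => by rw [hfg]; ring
    _ = ∑ r ∈ insert a U, v r * f.eval r := by
        rw [sum_insert haU, hva, hUsum, hgsum]
        ring

theorem exists_radau_quadrature_s13 {T : Finset ℝ} {w : ℝ → ℝ} (hw : ∀ s ∈ T, 0 < w s) {a b : ℝ}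
    (hT : ∀ s ∈ T, s ∈ Icc a b) {m : ℕ} (hm : m + 1 ≤ (T.erase a).card) :
    ∃ (R : Finset ℝ) (v : ℝ → ℝ), a ∈ R ∧ R.card = m + 1 ∧ (∀ r ∈ R, r ∈ Icc a b) ∧
      (∀ r ∈ R, 0 ≤ v r) ∧ ∀ f : ℝ[X], f.natDegree ≤ 2 * m →
        ∑ s ∈ T, w s * f.eval s = ∑ r ∈ R, v r * f.eval r := by
  have hT' : ∀ s ∈ T.erase a, a < s ∧ s ∈ Icc a b := fun s hs =>
    ⟨(hT s (mem_of_mem_erase hs)).1.lt_of_ne (ne_of_mem_erase hs).symm, hT s (mem_of_mem_erase hs)⟩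
  obtain ⟨U, u, hUcard, hU, -, hgauss⟩ := exists_gauss_quadrature_s13
    (w := fun s => w s * (s - a)) (fun s hs => mul_pos (hw s (mem_of_mem_erase hs))
      (sub_pos.mpr (hT' s hs).1)) (fun s hs => (hT' s hs).2) hm
  have haU : a ∉ U := fun h => (hU a h).1.false
  obtain ⟨v, hexact⟩ := exists_quadrature_insert haU hgauss
  have hcard : (insert a U).card = m + 1 := by rw [card_insert_of_notMem haU, hUcard]
  refine ⟨insert a U, v, mem_insert_self a U, hcard, fun r hr => ?_,
    fun r hr => quadrature_weight_nonneg (fun s hs => (hw s hs).le)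
      (fun f hf => hexact f (by rwa [hcard, Nat.add_sub_cancel] at hf)) hr, hexact⟩
  obtain ⟨s, hs⟩ := card_pos.mp (Nat.lt_of_succ_le (Nat.le_of_add_left_le hm))
  rcases mem_insert.mp hr with rfl | hr
  · exact ⟨le_rfl, (hT' s hs).1.le.trans (hT' s hs).2.2⟩
  · exact Ioo_subset_Icc_self (hU r hr)

theorem exists_finset_card_le_moments_eq (N : ℕ) {T : Finset ℝ} {w : ℝ → ℝ}
    (hw : ∀ s ∈ T, 0 < w s) {a b : ℝ} (hab : a ≤ b) (hT : ∀ s ∈ T, s ∈ Icc a b) :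
    ∃ (S : Finset ℝ) (v : ℝ → ℝ), S.card ≤ N / 2 + 1 ∧ (∀ s ∈ S, s ∈ Icc a b) ∧
      (∀ s ∈ S, 0 ≤ v s) ∧ (Even N → a ∈ S) ∧
      ∀ k ≤ N, ∑ s ∈ T, w s * s ^ k = ∑ s ∈ S, v s * s ^ k := by
  have hmoment : ∀ {S : Finset ℝ} {v : ℝ → ℝ} {k : ℕ}, (∀ f : ℝ[X], f.natDegree ≤ k →
      ∑ s ∈ T, w s * f.eval s = ∑ s ∈ S, v s * f.eval s) →
      ∀ j ≤ k, ∑ s ∈ T, w s * s ^ j = ∑ s ∈ S, v s * s ^ j := fun hexact j hj => by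
    simpa using hexact (X ^ j) (by rwa [natDegree_X_pow])
  obtain ⟨m, rfl | rfl⟩ := N.even_or_odd'
  · by_cases hm : m + 1 ≤ (T.erase a).card
    · obtain ⟨R, v, haR, hRcard, hR, hv, hexact⟩ := exists_radau_quadrature_s13 hw hT hm
      exact ⟨R, v, by omega, hR, hv, fun _ => haR, hmoment hexact⟩
    · -- few atoms: add `a` with weight zero
      refine ⟨insert a T, fun s => if s ∈ T then w s else 0, ?_,
        (Finset.forall_mem_insert _ _ _).mpr ⟨⟨le_rfl, hab⟩, hT⟩, fun s _ => ?_,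
        fun _ => mem_insert_self a T, fun k _ => ?_⟩
      · rw [← card_erase_add_one (mem_insert_self a T), erase_insert_eq_erase]
        omega
      · dsimp only
        split_ifs with hs
        exacts [(hw s hs).le, le_rfl]
      · rw [sum_insert_of_eq_zero_if_notMem fun ha => by simp [ha]]
        exact sum_congr rfl fun s hs => by simp [hs]
  · by_cases hm : m + 2 ≤ T.card
    · obtain ⟨R, v, hRcard, hR, hv, hexact⟩ := exists_gauss_quadrature_s13 hw hT hm
      refine ⟨R, v, by omega, fun r hr => Ioo_subset_Icc_self (hR r hr), hv,
        fun h => absurd h (Nat.not_even_two_mul_add_one m), hmoment fun f hf => hexact f (by omega)⟩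
    · exact ⟨T, w, by omega, hT, fun s hs => (hw s hs).le,
        fun h => absurd h (Nat.not_even_two_mul_add_one m), fun _ _ => rfl⟩

theorem exists_monotone_fin_sum_eq {S : Finset ℝ} (hS : S.Nonempty) {v : ℝ → ℝ}
    (hv : ∀ s ∈ S, 0 ≤ v s) {M : ℕ} (hM : S.card ≤ M) :
    ∃ c t : Fin M → ℝ, (∀ j, 0 ≤ c j) ∧ Monotone t ∧ (∀ j, t j ∈ S) ∧
      t ⟨0, (card_pos.mpr hS).trans_le hM⟩ = S.min' hS ∧
      ∀ f : ℝ → ℝ, ∑ j, c j * f (t j) = ∑ s ∈ S, v s * f s := by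
  obtain ⟨d, rfl⟩ := Nat.exists_eq_add_of_le hM
  have hn : 0 < S.card := card_pos.mpr hS
  let e := S.orderEmbOfFin rfl
  -- the sorted atoms, the last one repeated `d` times with weight zero
  let idx : Fin (S.card + d) → Fin S.card := fun j => ⟨min j (S.card - 1), by omega⟩
  have hidx : ∀ i : Fin S.card, idx (Fin.castAdd d i) = i := fun i => Fin.ext (by simp [idx]; omega)
  refine ⟨fun j => if h : (j : ℕ) < S.card then v (e ⟨j, h⟩) else 0, fun j => e (idx j),
    fun j => ?_, fun i j hij => e.monotone (by simp only [idx, Fin.mk_le_mk]; omega),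
    fun j => S.orderEmbOfFin_mem rfl _, orderEmbOfFin_zero rfl hn, fun f => ?_⟩
  · dsimp only
    split_ifs
    exacts [hv _ (S.orderEmbOfFin_mem rfl _), le_rfl]
  · rw [Fin.sum_univ_add, sum_eq_zero (s := (univ : Finset (Fin d))) fun i _ => by simp, add_zero]
    conv_rhs => rw [← image_orderEmbOfFin_univ S rfl, sum_image fun i _ j _ h => e.injective h]
    refine sum_congr rfl fun i _ => ?_
    simp [hidx]

theorem eval_image_eq_convexHull_general (N : ℕ) (tmin tmax : ℝ) (h : tmin < tmax)
    (M : ℕ) (hM : M = if Odd N then (N + 1) / 2 else (N + 2) / 2) (hMpos : 0 < M) :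
    (fun p : (Fin M → ℝ) × (Fin M → ℝ) =>
        fun i : Fin N => ∑ j, p.1 j * p.2 j ^ ((i : ℕ) + 1)) ''
      {p | (∀ j, 0 ≤ p.1 j) ∧ (∑ j, p.1 j = 1) ∧
        (∀ j, p.2 j ∈ Set.Icc tmin tmax) ∧ Monotone p.2 ∧
        (Even N → p.2 ⟨0, hMpos⟩ = tmin)} =
    convexHull ℝ ((fun t : ℝ => fun i : Fin N => t ^ ((i : ℕ) + 1)) ''
      Set.Icc tmin tmax) := by
  refine Subset.antisymm ?_ fun x hx => ?_
  · rintro _ ⟨p, ⟨hc0, hc1, ht, -, -⟩, rfl⟩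
    refine mem_convexHull_of_exists_fintype p.1 _ hc0 hc1 (fun j => mem_image_of_mem _ (ht j)) ?_
    ext i
    simp [Finset.sum_apply]
  obtain ⟨T, w, hT, hw, hw1, rfl⟩ := exists_finset_sum_smul_eq_of_mem_convexHull_image hx
  obtain ⟨S, v, hcard, hS, hv, haS, hmom⟩ := exists_finset_card_le_moments_eq N hw h.le hT
  have hmass : ∑ s ∈ S, v s = 1 := by simpa [hw1] using (hmom 0 (Nat.zero_le N)).symm
  have hSne : S.Nonempty := nonempty_of_sum_ne_zero (hmass ▸ one_ne_zero)
  obtain ⟨c, t, hc, ht, htS, ht0, hsum⟩ := exists_monotone_fin_sum_eq (M := M) hSne hv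
    (hcard.trans (by split_ifs at hM with hodd <;> rw [Nat.odd_iff] at * <;> omega))
  refine ⟨(c, t), ⟨hc, ?_, fun j => hS _ (htS j), ht, fun heven => ?_⟩, ?_⟩
  · simpa [hmass] using hsum fun _ => 1
  · exact ht0.trans (le_antisymm (min'_le S _ (haS heven)) (hS _ (min'_mem S hSne)).1)
  · ext i
    simpa [Finset.sum_apply, hmom _ (Nat.succ_le_of_lt i.2)] using hsum (· ^ ((i : ℕ) + 1))

/-- The image of the evaluation map on the set `Nam_N` of namings equals the convex
hull of the moment curve over `[t_min, t_max]`. -/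
theorem eval_image_eq_convexHull (N : ℕ) (hN : 0 < N) (tmin tmax : ℝ) (h : tmin < tmax)
    (M : ℕ) (hM : M = if Odd N then (N + 1) / 2 else (N + 2) / 2) (hMpos : 0 < M) :
    (fun p : (Fin M → ℝ) × (Fin M → ℝ) =>
        fun i : Fin N => ∑ j, p.1 j * p.2 j ^ ((i : ℕ) + 1)) ''
      {p | (∀ j, 0 ≤ p.1 j) ∧ (∑ j, p.1 j = 1) ∧
        (∀ j, p.2 j ∈ Set.Icc tmin tmax) ∧ Monotone p.2 ∧
        (Even N → p.2 ⟨0, hMpos⟩ = tmin)} =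
    convexHull ℝ ((fun t : ℝ => fun i : Fin N => t ^ ((i : ℕ) + 1)) ''
      Set.Icc tmin tmax) :=
  eval_image_eq_convexHull_general N tmin tmax h M hM hMpos
end

section
/- Let N be a positive integer and t_min < t_max. If two convex combinations of points on the moment curve C_N over [t_min, t_max], each using at most (N+1)/2 points when N is odd (or at most (N+2)/2 points with first point at t_min when N is even) and listed in weakly increasing parameter order, evaluate to the same point of ℝ^N, then one can be transformed into the other by a finite sequence of the following moves: adding or removing a term with coefficient zero, and merging two terms with equal parameter into one (or splitting one term into two with the same parameter and coefficients summing to the original). -/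
/-- A naming, presented as a list of (coefficient, parameter) pairs: nonnegative
coefficients summing to one, parameters weakly increasing within `[t_min, t_max]`. -/
def IsNamingList (tmin tmax : ℝ) (L : List (ℝ × ℝ)) : Prop :=
  (∀ p ∈ L, 0 ≤ p.1 ∧ p.2 ∈ Set.Icc tmin tmax) ∧
  (L.map Prod.fst).sum = 1 ∧ List.Chain' (fun a b : ℝ × ℝ => a.2 ≤ b.2) L

/-- `L'` is obtained from `L` by inserting a term with coefficient zero. -/
def ZeroAdd (L L' : List (ℝ × ℝ)) : Prop :=
  ∃ l1 l2 t, L = l1 ++ l2 ∧ L' = l1 ++ (0, t) :: l2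

/-- `L'` is obtained from `L` by splitting one term into two terms with the same
parameter whose coefficients sum to the original coefficient. -/
def EqualSplit (L L' : List (ℝ × ℝ)) : Prop :=
  ∃ l1 l2 c1 c2 t, L = l1 ++ (c1 + c2, t) :: l2 ∧ L' = l1 ++ (c1, t) :: (c2, t) :: l2

/-- A single move between namings: a zero-addition, an equal-split, or the inverse
of one of these, both endpoints being namings. -/
def NamingStep (tmin tmax : ℝ) (L L' : List (ℝ × ℝ)) : Prop :=
  IsNamingList tmin tmax L ∧ IsNamingList tmin tmax L' ∧
  (ZeroAdd L L' ∨ EqualSplit L L' ∨ ZeroAdd L' L ∨ EqualSplit L' L)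

/-- Equivalence of namings: a finite chain of moves. -/
def NamingEquiv (tmin tmax : ℝ) : List (ℝ × ℝ) → List (ℝ × ℝ) → Prop :=
  Relation.ReflTransGen (NamingStep tmin tmax)

/-- Evaluation of a naming as a convex combination of points on the moment curve. -/
def evalNamingList (N : ℕ) (L : List (ℝ × ℝ)) : Fin N → ℝ :=
  fun i => (L.map fun p => p.1 * p.2 ^ ((i : ℕ) + 1)).sum

/-!
A naming `[(c₁, t₁), …]` evaluates to the moments `∑ⱼ cⱼ tⱼ^d`, `1 ≤ d ≤ N`, of the
discrete measure `∑ⱼ cⱼ δ_{tⱼ}`, and its zeroth moment is `1`. Two namings with equal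
evaluation therefore have equal moments up to order `N`, and the length bounds put the union
of their parameters at no more than `N + 1` points (for even `N` both contain `t_min`), so by
Lagrange interpolation (Vandermonde) their measures coincide. Removing zero terms and merging
adjacent terms with equal parameters turns every naming into a non-reducible one with the same
measure, and a non-reducible naming is read off from its measure.
-/

open Finset

theorem Finset.eq_zero_of_forall_sum_mul_pow_eq_zero {K : Type*} [Field K] {S : Finset K}
    {N : ℕ} {f : K → K} (hS : #S ≤ N + 1) (h : ∀ d ≤ N, ∑ t ∈ S, f t * t ^ d = 0) :
    ∀ t ∈ S, f t = 0 := by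
  classical
  have hpoly : ∀ P : Polynomial K, P.natDegree < N + 1 → ∑ t ∈ S, f t * P.eval t = 0 := by
    intro P hP
    simp_rw [Polynomial.eval_eq_sum_range' hP, Finset.mul_sum, Finset.sum_comm (s := S),
      mul_left_comm (f _), ← Finset.mul_sum]
    exact Finset.sum_eq_zero fun d hd => by
      rw [h d (Nat.lt_succ_iff.mp (Finset.mem_range.mp hd)), mul_zero]
  intro t ht
  have hinj : Set.InjOn id (S : Set K) := Function.injective_id.injOn
  have hself : (Lagrange.basis S id t).eval t = 1 := Lagrange.eval_basis_self hinj ht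
  have hother : ∀ s ∈ S, s ≠ t → (Lagrange.basis S id t).eval s = 0 :=
    fun s hs hst => Lagrange.eval_basis_of_ne (v := id) hst.symm hs
  have hbasis := hpoly (Lagrange.basis S id t) (by rw [Lagrange.natDegree_basis hinj ht]; omega)
  rwa [Finset.sum_eq_single_of_mem t ht fun s hs hst => by rw [hother s hs hst, mul_zero],
    hself, mul_one] at hbasis

theorem List.exists_eq_append_cons_cons_of_not_isChain_lt {α β : Type*} [PartialOrder β]
    {f : α → β} : ∀ {L : List α}, L.IsChain (fun a b => f a ≤ f b) →
      ¬ L.IsChain (fun a b => f a < f b) → ∃ l₁ l₂ a b, L = l₁ ++ a :: b :: l₂ ∧ f a = f b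
  | [], _, hlt => absurd List.isChain_nil hlt
  | [a], _, hlt => absurd (List.isChain_singleton a) hlt
  | a :: b :: l, hle, hlt => by
    rw [List.isChain_cons_cons] at hle hlt
    by_cases hab : f a = f b
    · exact ⟨[], l, a, b, rfl, hab⟩
    · obtain ⟨l₁, l₂, c, d, hl, hcd⟩ :=
        exists_eq_append_cons_cons_of_not_isChain_lt hle.2 fun h => hlt ⟨hle.1.lt_of_ne hab, h⟩
      exact ⟨a :: l₁, l₂, c, d, by rw [hl, List.cons_append], hcd⟩

/-- The discrete measure `∑ⱼ cⱼ δ_{tⱼ}` of the naming `[(c₁, t₁), …]`, evaluated at `t`. -/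
noncomputable def weight (L : List (ℝ × ℝ)) (t : ℝ) : ℝ :=
  (L.map fun p => if p.2 = t then p.1 else 0).sum

@[simp] theorem weight_nil (t : ℝ) : weight [] t = 0 := rfl

@[simp] theorem weight_cons (p : ℝ × ℝ) (L : List (ℝ × ℝ)) (t : ℝ) :
    weight (p :: L) t = (if p.2 = t then p.1 else 0) + weight L t := by
  simp [weight]

@[simp] theorem weight_append (L M : List (ℝ × ℝ)) (t : ℝ) :
    weight (L ++ M) t = weight L t + weight M t := by
  simp [weight]

theorem weight_eq_zero {L : List (ℝ × ℝ)} {t : ℝ} (h : ∀ p ∈ L, p.2 ≠ t) : weight L t = 0 :=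
  List.sum_eq_zero fun _ hx => by
    obtain ⟨p, hp, rfl⟩ := List.mem_map.mp hx
    exact if_neg (h p hp)

theorem weight_nonneg {L : List (ℝ × ℝ)} (h : ∀ p ∈ L, 0 ≤ p.1) (t : ℝ) : 0 ≤ weight L t :=
  List.sum_nonneg fun _ hx => by
    obtain ⟨p, hp, rfl⟩ := List.mem_map.mp hx
    split_ifs
    exacts [h p hp, le_rfl]

theorem weight_pos_iff {L : List (ℝ × ℝ)} (h : ∀ p ∈ L, 0 < p.1) (t : ℝ) :
    0 < weight L t ↔ t ∈ L.map Prod.snd := by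
  induction L with
  | nil => simp
  | cons p L ih =>
    have hp := h p List.mem_cons_self
    have hL : ∀ q ∈ L, 0 < q.1 := fun q hq => h q (List.mem_cons_of_mem p hq)
    by_cases hpt : p.2 = t
    · simpa [hpt] using add_pos_of_pos_of_nonneg hp (weight_nonneg (fun q hq => (hL q hq).le) t)
    · simp [hpt, ih hL, Ne.symm hpt]

theorem weight_snd_eq_fst {L : List (ℝ × ℝ)} (hL : (L.map Prod.snd).Nodup) {p : ℝ × ℝ}
    (hp : p ∈ L) : weight L p.2 = p.1 := by
  induction L with
  | nil => simp at hp
  | cons q L ih =>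
    rw [List.map_cons, List.nodup_cons] at hL
    rcases List.mem_cons.mp hp with rfl | hp
    · have hq : ∀ r ∈ L, r.2 ≠ p.2 := fun r hr hrp => hL.1 (hrp ▸ List.mem_map_of_mem hr)
      simp [weight_eq_zero hq]
    · have hqp : q.2 ≠ p.2 := fun h => hL.1 (h ▸ List.mem_map_of_mem hp)
      simp [hqp, ih hL.2 hp]

/-- The non-reducible namings: no move removes a term. -/
def IsReducedNaming (L : List (ℝ × ℝ)) : Prop :=
  (∀ p ∈ L, 0 < p.1) ∧ (L.map Prod.snd).SortedLT

theorem IsReducedNaming.eq_map_weight {L : List (ℝ × ℝ)} (hL : IsReducedNaming L) :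
    L = (L.map Prod.snd).map fun t => (weight L t, t) := by
  conv_lhs => rw [← List.map_id L]
  rw [List.map_map]
  exact List.map_congr_left fun p hp => by simp [weight_snd_eq_fst hL.2.nodup hp]

theorem IsReducedNaming.eq_of_weight_eq {L M : List (ℝ × ℝ)} (hL : IsReducedNaming L)
    (hM : IsReducedNaming M) (h : weight L = weight M) : L = M := by
  have hsnd : L.map Prod.snd = M.map Prod.snd := hL.2.eq_of_mem_iff hM.2 fun t => by
    rw [← weight_pos_iff hL.1, ← weight_pos_iff hM.1, h]
  rw [hL.eq_map_weight, hM.eq_map_weight, hsnd, h]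

section Moves

variable {tmin tmax : ℝ}

theorem weight_append_zero_cons (l₁ l₂ : List (ℝ × ℝ)) (t : ℝ) :
    weight (l₁ ++ (0, t) :: l₂) = weight (l₁ ++ l₂) := by
  funext s
  simp

theorem weight_append_add_cons (l₁ l₂ : List (ℝ × ℝ)) (c₁ c₂ t : ℝ) :
    weight (l₁ ++ (c₁ + c₂, t) :: l₂) = weight (l₁ ++ (c₁, t) :: (c₂, t) :: l₂) := by
  funext s
  simp only [weight_append, weight_cons]
  split_ifs <;> ring

theorem namingStep_remove_zero {l₁ l₂ : List (ℝ × ℝ)} {t : ℝ}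
    (h : IsNamingList tmin tmax (l₁ ++ (0, t) :: l₂)) :
    NamingStep tmin tmax (l₁ ++ (0, t) :: l₂) (l₁ ++ l₂) := by
  obtain ⟨hmem, hsum, hchain⟩ := h
  refine ⟨⟨hmem, hsum, hchain⟩, ⟨fun p hp => hmem p ?_, ?_, ?_⟩, .inr <| .inr <| .inl
    ⟨l₁, l₂, t, rfl, rfl⟩⟩
  · simp only [List.mem_append, List.mem_cons] at hp ⊢
    tauto
  · simpa using hsum
  · exact hchain.sublist ((l₂.sublist_cons_self _).append_left l₁)

theorem namingStep_merge {l₁ l₂ : List (ℝ × ℝ)} {c₁ c₂ t : ℝ}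
    (h : IsNamingList tmin tmax (l₁ ++ (c₁, t) :: (c₂, t) :: l₂)) :
    NamingStep tmin tmax (l₁ ++ (c₁, t) :: (c₂, t) :: l₂) (l₁ ++ (c₁ + c₂, t) :: l₂) := by
  obtain ⟨hmem, hsum, hchain⟩ := h
  have h₁ := hmem (c₁, t) (by simp)
  have h₂ := hmem (c₂, t) (by simp)
  refine ⟨⟨hmem, hsum, hchain⟩, ⟨fun p hp => ?_, ?_, ?_⟩, .inr <| .inr <| .inr
    ⟨l₁, l₂, c₁, c₂, t, rfl, rfl⟩⟩
  · simp only [List.mem_append, List.mem_cons] at hp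
    rcases hp with hp | rfl | hp
    · exact hmem p (by simp [hp])
    · exact ⟨add_nonneg h₁.1 h₂.1, h₁.2⟩
    · exact hmem p (by simp [hp])
  · simpa [add_assoc] using hsum
  -- the merged list has the same parameters as the sublist that drops `(c₁, t)`
  · have hsub : (l₁ ++ (c₂, t) :: l₂).Sublist (l₁ ++ (c₁, t) :: (c₂, t) :: l₂) :=
      ((l₂.cons (c₂, t)).sublist_cons_self _).append_left l₁
    have hsnd := ((List.isChain_map Prod.snd).mpr hchain).sublist (hsub.map Prod.snd)
    exact (List.isChain_map Prod.snd).mp (by simpa using hsnd)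

theorem namingEquiv_symm {L M : List (ℝ × ℝ)} (h : NamingEquiv tmin tmax L M) :
    NamingEquiv tmin tmax M L := by
  induction h with
  | refl => exact .refl
  | tail _ hstep ih =>
    obtain ⟨hL, hM, hmove⟩ := hstep
    exact ih.head ⟨hM, hL, by tauto⟩

theorem exists_isReducedNaming_namingEquiv (L : List (ℝ × ℝ))
    (hL : IsNamingList tmin tmax L) :
    ∃ M, NamingEquiv tmin tmax L M ∧ IsReducedNaming M ∧ weight M = weight L := by
  by_cases hzero : ∃ p ∈ L, p.1 = 0
  · obtain ⟨⟨c, t⟩, hp, hc : c = 0⟩ := hzero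
    obtain ⟨l₁, l₂, rfl⟩ := List.append_of_mem hp
    subst hc
    have hstep := namingStep_remove_zero hL
    obtain ⟨M, hLM, hM, hw⟩ := exists_isReducedNaming_namingEquiv (l₁ ++ l₂) hstep.2.1
    exact ⟨M, .head hstep hLM, hM, hw.trans (weight_append_zero_cons l₁ l₂ t).symm⟩
  by_cases hsorted : (L.map Prod.snd).SortedLT
  · push Not at hzero
    exact ⟨L, .refl, ⟨fun p hp => (hL.1 p hp).1.lt_of_ne' (hzero p hp), hsorted⟩, rfl⟩
  rw [List.sortedLT_iff_isChain, List.isChain_map] at hsorted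
  obtain ⟨l₁, l₂, ⟨c₁, t⟩, ⟨c₂, t'⟩, rfl, rfl : t = t'⟩ :=
    List.exists_eq_append_cons_cons_of_not_isChain_lt hL.2.2 hsorted
  have hstep := namingStep_merge hL
  obtain ⟨M, hLM, hM, hw⟩ := exists_isReducedNaming_namingEquiv _ hstep.2.1
  exact ⟨M, .head hstep hLM, hM, hw.trans (weight_append_add_cons l₁ l₂ c₁ c₂ t)⟩
termination_by L.length
decreasing_by all_goals subst_vars; simp

end Moves

theorem sum_map_mul_pow_eq_sum_weight {L : List (ℝ × ℝ)} {S : Finset ℝ}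
    (hS : ∀ p ∈ L, p.2 ∈ S) (d : ℕ) :
    (L.map fun p => p.1 * p.2 ^ d).sum = ∑ t ∈ S, weight L t * t ^ d := by
  induction L with
  | nil => simp
  | cons p L ih =>
    rw [List.map_cons, List.sum_cons, ih fun q hq => hS q (List.mem_cons_of_mem p hq)]
    simp [add_mul, Finset.sum_add_distrib, ite_mul, hS p List.mem_cons_self]

theorem weight_eq_of_sum_map_mul_pow_eq {L M : List (ℝ × ℝ)} {S : Finset ℝ} {N : ℕ}
    (hL : ∀ p ∈ L, p.2 ∈ S) (hM : ∀ p ∈ M, p.2 ∈ S) (hS : #S ≤ N + 1)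
    (h : ∀ d ≤ N, (L.map fun p => p.1 * p.2 ^ d).sum = (M.map fun p => p.1 * p.2 ^ d).sum) :
    weight L = weight M := by
  have hzero := Finset.eq_zero_of_forall_sum_mul_pow_eq_zero (f := weight L - weight M) hS
    fun d hd => by
      simp only [Pi.sub_apply, sub_mul, Finset.sum_sub_distrib,
        ← sum_map_mul_pow_eq_sum_weight hL, ← sum_map_mul_pow_eq_sum_weight hM, h d hd, sub_self]
  funext t
  by_cases ht : t ∈ S
  · exact sub_eq_zero.mp (hzero t ht)
  · rw [weight_eq_zero (t := t) fun p hp hpt => ht (hpt ▸ hL p hp),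
      weight_eq_zero (t := t) fun p hp hpt => ht (hpt ▸ hM p hp)]

theorem List.card_toFinset_union_add_one_le {α : Type*} [DecidableEq α] {l m : List α} {a : α}
    (hl : a ∈ l) (hm : a ∈ m) : #(l.toFinset ∪ m.toFinset) + 1 ≤ l.length + m.length := by
  have hinter : 1 ≤ #(l.toFinset ∩ m.toFinset) :=
    Finset.card_pos.mpr ⟨a, by simp [hl, hm]⟩
  have := Finset.card_union_add_card_inter l.toFinset m.toFinset
  have := l.toFinset_card_le
  have := m.toFinset_card_le
  omega

theorem card_params_union_le {N : ℕ} {tmin : ℝ} {L M : List (ℝ × ℝ)}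
    (hodd : Odd N → L.length ≤ (N + 1) / 2 ∧ M.length ≤ (N + 1) / 2)
    (heven : Even N → L.length ≤ (N + 2) / 2 ∧ M.length ≤ (N + 2) / 2 ∧
      (L.map Prod.snd).head? = some tmin ∧ (M.map Prod.snd).head? = some tmin) :
    #((L.map Prod.snd).toFinset ∪ (M.map Prod.snd).toFinset) ≤ N + 1 := by
  rcases Nat.even_or_odd N with ⟨k, rfl⟩ | ⟨k, rfl⟩
  · obtain ⟨hL, hM, hLmin, hMmin⟩ := heven ⟨k, rfl⟩
    have := List.card_toFinset_union_add_one_le (List.mem_of_mem_head? hLmin)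
      (List.mem_of_mem_head? hMmin)
    simp only [List.length_map] at this
    omega
  · obtain ⟨hL, hM⟩ := hodd ⟨k, rfl⟩
    have := Finset.card_union_le (L.map Prod.snd).toFinset (M.map Prod.snd).toFinset
    have hLcard := (L.map Prod.snd).toFinset_card_le
    have hMcard := (M.map Prod.snd).toFinset_card_le
    simp only [List.length_map] at hLcard hMcard
    omega

theorem equal_eval_namings_equivalent_general (N : ℕ) (tmin tmax : ℝ)
    (L1 L2 : List (ℝ × ℝ))
    (h1 : IsNamingList tmin tmax L1) (h2 : IsNamingList tmin tmax L2)
    (hodd : Odd N → L1.length ≤ (N + 1) / 2 ∧ L2.length ≤ (N + 1) / 2)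
    (heven : Even N → L1.length ≤ (N + 2) / 2 ∧ L2.length ≤ (N + 2) / 2 ∧
      (L1.map Prod.snd).head? = some tmin ∧ (L2.map Prod.snd).head? = some tmin)
    (heq : evalNamingList N L1 = evalNamingList N L2) :
    NamingEquiv tmin tmax L1 L2 := by
  have hmoments : ∀ d ≤ N,
      (L1.map fun p => p.1 * p.2 ^ d).sum = (L2.map fun p => p.1 * p.2 ^ d).sum := by
    rintro (_ | d) hd
    · simpa using h1.2.1.trans h2.2.1.symm
    · exact congrFun heq ⟨d, hd⟩
  have hweight : weight L1 = weight L2 :=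
    weight_eq_of_sum_map_mul_pow_eq (fun p hp => by simp [List.mem_map_of_mem hp])
      (fun p hp => by simp [List.mem_map_of_mem hp]) (card_params_union_le hodd heven) hmoments
  obtain ⟨M1, hM1, hred1, hw1⟩ := exists_isReducedNaming_namingEquiv L1 h1
  obtain ⟨M2, hM2, hred2, hw2⟩ := exists_isReducedNaming_namingEquiv L2 h2
  obtain rfl : M1 = M2 := hred1.eq_of_weight_eq hred2 (by rw [hw1, hw2, hweight])
  exact hM1.trans (namingEquiv_symm hM2)

/-- Two namings with at most `(N+1)/2` terms (`N` odd), or at most `(N+2)/2` terms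
and first parameter `t_min` (`N` even), that evaluate to the same point of `ℝ^N`,
are connected by a finite chain of zero-additions, equal-splits and their
inverses. -/
theorem equal_eval_namings_equivalent (N : ℕ) (hN : 0 < N) (tmin tmax : ℝ)
    (h : tmin < tmax) (L1 L2 : List (ℝ × ℝ))
    (h1 : IsNamingList tmin tmax L1) (h2 : IsNamingList tmin tmax L2)
    (hodd : Odd N → L1.length ≤ (N + 1) / 2 ∧ L2.length ≤ (N + 1) / 2)
    (heven : Even N → L1.length ≤ (N + 2) / 2 ∧ L2.length ≤ (N + 2) / 2 ∧
      (L1.map Prod.snd).head? = some tmin ∧ (L2.map Prod.snd).head? = some tmin)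
    (heq : evalNamingList N L1 = evalNamingList N L2) :
    NamingEquiv tmin tmax L1 L2 :=
  equal_eval_namings_equivalent_general N tmin tmax L1 L2 h1 h2 hodd heven heq
end
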